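/- arXiv:2211.01743 — 4 statements merged into one kernel-verified Lean document; each statement's English description precedes it below -/
import Mathlib

section
/- Let F be a distribution on ℝ satisfying the β-regularity condition: there exist constants 0 < c_1 < c_2 and β > 0 such that 1 − F(F^{-1}(1) − t) ∈ [c_1 t^β, c_2 t^β] for all 0 ≤ t ≤ ε. Let X_1,…,X_n be i.i.d. from F and X̂_i = X_i + Ẑ_i with Ẑ_i i.i.d. N(0,1/m) independent of the X_i. If n ≥ c_1^{-1} 2^β ε^{-β} log(2/δ) and m ≥ 4 ε^{-2} log(2n/δ), then G = max_{i∈[n]} X̂_i satisfies P(|G − F^{-1}(1)| > ε) ≤ δ. -/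
/-!
Write `W_i = X_i + Z_i`, so that each `W_i` has law `μ ∗ N(0, 1/m)`. The maximum overshoots
`x_max + ε` only if some `W_i` does, and as `X_i ≤ x_max` almost surely this needs a Gaussian
excursion `Z_i > ε`: a union bound gives `n e^{-mε²/2} / 2`. The maximum undershoots `x_max - ε`
only if every `W_i` does, which by independence has probability at most
`(1 - K (1 - e^{-mε²/8} / 2))^n` with `K = P(X ≥ x_max - ε/2) ≥ c₁ (ε/2)^β`. The sample size
makes `(1 - K)^n ≤ δ/2`; the noise level makes the first term at most `δ/8` and keeps the factor
`e^{-mε²/8}` from inflating the second one by more than `e^{1/2} < 7/4`.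
-/

open MeasureTheory ProbabilityTheory Set Real
open scoped NNReal ENNReal

namespace ProbabilityTheory

variable {v : ℝ≥0}

lemma gaussianReal_Ici_self (μ : ℝ) (hv : v ≠ 0) : gaussianReal μ v (Ici μ) = 2⁻¹ := by
  have hsymm : gaussianReal 0 v (Iic 0) = gaussianReal 0 v (Ici 0) := by
    have h := gaussianReal_map_neg (μ := 0) (v := v)
    rw [neg_zero] at h
    conv_lhs => rw [← h]
    rw [Measure.map_apply measurable_neg measurableSet_Iic]
    congr 1
    ext x
    simp
  have := nullSingletonClass_gaussianReal (μ := 0) hv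
  have hsum := measure_union_add_inter (μ := gaussianReal 0 v) (Iic 0) (measurableSet_Ici (a := 0))
  rw [Iic_union_Ici, Iic_inter_Ici, Icc_self, measure_univ, measure_singleton, add_zero, hsymm,
    ← two_mul] at hsum
  have hshift := gaussianReal_map_add_const (μ := 0) (v := v) μ
  rw [zero_add] at hshift
  rw [← hshift, Measure.map_apply (measurable_add_const μ) measurableSet_Ici,
    show (· + μ) ⁻¹' Ici μ = Ici 0 by ext x; simp]
  exact ENNReal.eq_inv_of_mul_eq_one_left (by rw [mul_comm, hsum])

lemma gaussianReal_Ioi_le (hv : v ≠ 0) {t : ℝ} (ht : 0 ≤ t) :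
    gaussianReal 0 v (Ioi t) ≤ ENNReal.ofReal (exp (-t ^ 2 / (2 * v)) / 2) := by
  have hv' : (0 : ℝ) < v := NNReal.coe_pos.mpr (pos_iff_ne_zero.mpr hv)
  -- on `[t, ∞)` the centred density is at most `e^{-t²/2v}` times the density centred at `t`
  have hpdf : ∀ x ∈ Ici t,
      gaussianPDF 0 v x ≤ ENNReal.ofReal (exp (-t ^ 2 / (2 * v))) * gaussianPDF t v x := by
    intro x (hx : t ≤ x)
    rw [gaussianPDF, gaussianPDF, ← ENNReal.ofReal_mul (exp_nonneg _), gaussianPDFReal,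
      gaussianPDFReal, mul_left_comm, ← exp_add]
    gcongr
    rw [← add_div, div_le_div_iff_of_pos_right (by positivity)]
    nlinarith
  calc gaussianReal 0 v (Ioi t) ≤ gaussianReal 0 v (Ici t) := measure_mono Ioi_subset_Ici_self
    _ = ∫⁻ x in Ici t, gaussianPDF 0 v x := gaussianReal_apply 0 hv _
    _ ≤ ∫⁻ x in Ici t, ENNReal.ofReal (exp (-t ^ 2 / (2 * v))) * gaussianPDF t v x :=
        setLIntegral_mono ((measurable_gaussianPDF t v).const_mul _) hpdf
    _ = ENNReal.ofReal (exp (-t ^ 2 / (2 * v))) * gaussianReal t v (Ici t) := by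
        rw [lintegral_const_mul _ (measurable_gaussianPDF t v), gaussianReal_apply t hv]
    _ = ENNReal.ofReal (exp (-t ^ 2 / (2 * v)) / 2) := by
        rw [gaussianReal_Ici_self t hv, ENNReal.ofReal_div_of_pos two_pos, ENNReal.ofReal_ofNat,
          ENNReal.div_eq_inv_mul, mul_comm]

lemma gaussianReal_Iio_neg_le (hv : v ≠ 0) {t : ℝ} (ht : 0 ≤ t) :
    gaussianReal 0 v (Iio (-t)) ≤ ENNReal.ofReal (exp (-t ^ 2 / (2 * v)) / 2) := by
  have h := gaussianReal_map_neg (μ := 0) (v := v)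
  rw [neg_zero] at h
  rw [← h, Measure.map_apply measurable_neg measurableSet_Iio,
    show (fun x : ℝ => -x) ⁻¹' Iio (-t) = Ioi t by ext x; simp]
  exact gaussianReal_Ioi_le hv ht

end ProbabilityTheory

namespace MeasureTheory.Measure

variable {μ ν : Measure ℝ} [IsProbabilityMeasure μ] [IsProbabilityMeasure ν]

lemma conv_Ioi_add_le (a b : ℝ) : (μ ∗ ν) (Ioi (a + b)) ≤ μ (Ioi a) + ν (Ioi b) := by
  rw [conv, map_apply measurable_add measurableSet_Ioi]
  calc (μ.prod ν) ((fun p : ℝ × ℝ => p.1 + p.2) ⁻¹' Ioi (a + b))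
      ≤ (μ.prod ν) (Ioi a ×ˢ univ ∪ univ ×ˢ Ioi b) := measure_mono fun p hp => by
        by_contra! h
        simp only [mem_union, mem_prod, mem_Ioi, mem_univ, and_true, true_and, not_or,
          not_lt] at h
        simp only [mem_preimage, mem_Ioi] at hp
        linarith
    _ ≤ μ (Ioi a) + ν (Ioi b) :=
        (measure_union_le _ _).trans (by simp only [prod_prod, measure_univ, mul_one, one_mul,
          le_refl])

lemma conv_Iio_add_le (a b : ℝ) : (μ ∗ ν) (Iio (a + b)) ≤ 1 - μ (Ici a) * ν (Ici b) := by
  rw [conv, map_apply measurable_add measurableSet_Iio, ← prod_prod,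
    ← prob_compl_eq_one_sub (measurableSet_Ici.prod measurableSet_Ici)]
  refine measure_mono fun p hp hmem => ?_
  simp only [mem_preimage, mem_Iio] at hp
  simp only [mem_prod, mem_Ici] at hmem
  linarith [hmem.1, hmem.2]

end MeasureTheory.Measure

lemma measure_lt_abs_iSup_sub_le {Ω ι : Type*} [MeasurableSpace Ω] {P : Measure Ω}
    [Fintype ι] [Nonempty ι] {W : ι → Ω → ℝ} {ρ : Measure ℝ}
    (hindep : iIndepFun W P) (hlaw : ∀ i, HasLaw (W i) ρ P) (x ε : ℝ) :
    P {ω | ε < |(⨆ i, W i ω) - x|} ≤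
      Fintype.card ι * ρ (Ioi (x + ε)) + ρ (Iio (x - ε)) ^ Fintype.card ι := by
  have hsub : {ω | ε < |(⨆ i, W i ω) - x|} ⊆
      (⋃ i, W i ⁻¹' Ioi (x + ε)) ∪ ⋂ i, W i ⁻¹' Iio (x - ε) := by
    intro ω (hω : ε < _)
    rcases lt_abs.mp hω with h | h
    · obtain ⟨i, hi⟩ := exists_eq_ciSup_of_finite (f := fun i => W i ω)
      exact Or.inl (mem_iUnion.mpr ⟨i, show x + ε < W i ω by linarith⟩)
    · refine Or.inr (mem_iInter.mpr fun i => show W i ω < x - ε from ?_)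
      linarith [le_ciSup (Set.finite_range fun i => W i ω).bddAbove i]
  have hpre : ∀ i s, MeasurableSet s → P (W i ⁻¹' s) = ρ s := fun i s hs => by
    rw [← (hlaw i).map_eq, Measure.map_apply_of_aemeasurable (hlaw i).aemeasurable hs]
  calc P {ω | ε < |(⨆ i, W i ω) - x|}
      ≤ P (⋃ i, W i ⁻¹' Ioi (x + ε)) + P (⋂ i, W i ⁻¹' Iio (x - ε)) :=
        (measure_mono hsub).trans (measure_union_le _ _)
    _ ≤ ∑ i, P (W i ⁻¹' Ioi (x + ε)) + ∏ i, P (W i ⁻¹' Iio (x - ε)) := by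
        gcongr
        · exact measure_iUnion_fintype_le _ _
        · exact (hindep.meas_iInter fun i => ⟨_, measurableSet_Iio, rfl⟩).le
    _ = Fintype.card ι * ρ (Ioi (x + ε)) + ρ (Iio (x - ε)) ^ Fintype.card ι := by
        simp only [hpre _ _ measurableSet_Ioi, hpre _ _ measurableSet_Iio, Finset.sum_const,
          Finset.prod_const, Finset.card_univ, nsmul_eq_mul]

lemma exp_neg_sq_div_le_one (t : ℝ) (v : ℝ≥0) : exp (-t ^ 2 / (2 * v)) ≤ 1 :=
  exp_le_one_iff.mpr
    (div_nonpos_of_nonpos_of_nonneg (neg_nonpos.mpr (sq_nonneg t)) (by positivity))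

section NoisyObservation

variable {μ : Measure ℝ} [IsProbabilityMeasure μ] {v : ℝ≥0}

lemma conv_gaussianReal_Ioi_add_le (hv : v ≠ 0) {x t : ℝ} (hx : μ (Ioi x) = 0) (ht : 0 ≤ t) :
    (μ ∗ gaussianReal 0 v) (Ioi (x + t)) ≤ ENNReal.ofReal (exp (-t ^ 2 / (2 * v)) / 2) :=
  calc (μ ∗ gaussianReal 0 v) (Ioi (x + t)) ≤ μ (Ioi x) + gaussianReal 0 v (Ioi t) :=
        Measure.conv_Ioi_add_le x t
    _ ≤ ENNReal.ofReal (exp (-t ^ 2 / (2 * v)) / 2) := by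
        rw [hx, zero_add]; exact gaussianReal_Ioi_le hv ht

lemma conv_gaussianReal_Iio_sub_le (hv : v ≠ 0) (x : ℝ) {t : ℝ} (ht : 0 ≤ t) :
    (μ ∗ gaussianReal 0 v) (Iio (x - t)) ≤
      ENNReal.ofReal (1 - μ.real (Ici x) * (1 - exp (-t ^ 2 / (2 * v)) / 2)) := by
  have hq1 : exp (-t ^ 2 / (2 * v)) / 2 ≤ 1 := by linarith [exp_neg_sq_div_le_one t v]
  set q := exp (-t ^ 2 / (2 * v)) / 2
  have hgauss : ENNReal.ofReal (1 - q) ≤ gaussianReal 0 v (Ici (-t)) := by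
    rw [← compl_Iio, prob_compl_eq_one_sub measurableSet_Iio,
      ENNReal.ofReal_sub _ (by positivity), ENNReal.ofReal_one]
    exact tsub_le_tsub_left (gaussianReal_Iio_neg_le hv ht) 1
  calc (μ ∗ gaussianReal 0 v) (Iio (x - t))
        ≤ 1 - μ (Ici x) * gaussianReal 0 v (Ici (-t)) := by
        simpa only [sub_eq_add_neg] using Measure.conv_Iio_add_le x (-t)
    _ ≤ 1 - ENNReal.ofReal (μ.real (Ici x)) * ENNReal.ofReal (1 - q) := by
        rw [ofReal_measureReal]; gcongr
    _ = ENNReal.ofReal (1 - μ.real (Ici x) * (1 - q)) := by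
        rw [← ENNReal.ofReal_mul measureReal_nonneg,
          ENNReal.ofReal_sub _ (mul_nonneg measureReal_nonneg (by linarith)), ENNReal.ofReal_one]

lemma measure_lt_abs_iSup_add_sub_le {Ω : Type*} [MeasurableSpace Ω] {P : Measure Ω}
    (hv : v ≠ 0) {n : ℕ} [NeZero n] {X Z : Fin n → Ω → ℝ}
    (hindep : iIndepFun (fun i ω => (X i ω, Z i ω)) P)
    (hlaw : ∀ i, HasLaw (fun ω => (X i ω, Z i ω)) (μ.prod (gaussianReal 0 v)) P)
    {x ε : ℝ} (hx : μ (Ioi x) = 0) (hε : 0 ≤ ε) :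
    P {ω | ε < |(⨆ i, (X i ω + Z i ω)) - x|} ≤
      ENNReal.ofReal (n * (exp (-ε ^ 2 / (2 * v)) / 2) +
        (1 - μ.real (Ici (x - ε / 2)) * (1 - exp (-(ε / 2) ^ 2 / (2 * v)) / 2)) ^ n) := by
  have hsum : ∀ i, HasLaw (fun ω => X i ω + Z i ω) (μ ∗ gaussianReal 0 v) P := fun i =>
    (⟨measurable_add.aemeasurable, rfl⟩ : HasLaw (fun p : ℝ × ℝ => p.1 + p.2) _ _).comp
      (hlaw i)
  have hlow := conv_gaussianReal_Iio_sub_le (μ := μ) (t := ε / 2) hv (x - ε / 2) (by positivity)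
  rw [sub_sub, add_halves] at hlow
  have hK0 : 0 ≤ μ.real (Ici (x - ε / 2)) := measureReal_nonneg
  have hK1 : μ.real (Ici (x - ε / 2)) ≤ 1 := measureReal_le_one
  have hq0 : 0 ≤ exp (-(ε / 2) ^ 2 / (2 * v)) / 2 := by positivity
  have hq1 : exp (-(ε / 2) ^ 2 / (2 * v)) / 2 ≤ 1 := by
    linarith [exp_neg_sq_div_le_one (ε / 2) v]
  set K := μ.real (Ici (x - ε / 2))
  set q := exp (-(ε / 2) ^ 2 / (2 * v)) / 2
  have hr : 0 ≤ 1 - K * (1 - q) := by nlinarith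
  calc P {ω | ε < |(⨆ i, (X i ω + Z i ω)) - x|}
      ≤ n * (μ ∗ gaussianReal 0 v) (Ioi (x + ε)) +
          (μ ∗ gaussianReal 0 v) (Iio (x - ε)) ^ n := by
        simpa only [Fintype.card_fin] using
          measure_lt_abs_iSup_sub_le (W := fun i ω => X i ω + Z i ω)
            (hindep.comp (fun _ p => p.1 + p.2) fun _ => measurable_add) hsum x ε
    _ ≤ n * ENNReal.ofReal (exp (-ε ^ 2 / (2 * v)) / 2) +
          ENNReal.ofReal (1 - K * (1 - q)) ^ n := by
        gcongr
        exact conv_gaussianReal_Ioi_add_le hv hx hε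
    _ = _ := by
        rw [ENNReal.ofReal_add (by positivity) (by positivity), ENNReal.ofReal_mul (by positivity),
          ENNReal.ofReal_natCast, ENNReal.ofReal_pow hr]

end NoisyObservation

lemma le_exp_half (x : ℝ) : x ≤ exp (x / 2) := by
  have h := add_one_le_exp (x / 2 - 1)
  rw [exp_sub, le_div_iff₀ (exp_pos 1), sub_add_cancel] at h
  rcases le_or_gt x 0 with hx | hx
  · linarith [exp_pos (x / 2)]
  · nlinarith [exp_one_gt_d9]

lemma exp_one_half_lt : exp (1 / 2) < 7 / 4 := by
  refine lt_of_pow_lt_pow_left₀ 2 (by norm_num) ?_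
  rw [← exp_nat_mul]
  norm_num
  linarith [exp_one_lt_d9]

section ErrorTerms

variable {n : ℕ} {δ s : ℝ}

lemma natCast_mul_exp_neg_half_le (hn : 1 ≤ n) (hδ0 : 0 < δ) (hδ1 : δ ≤ 1)
    (hs : 4 * log (2 * n / δ) ≤ s) : n * (exp (-s / 2) / 2) ≤ δ / 8 := by
  have hn' : (1 : ℝ) ≤ n := by exact_mod_cast hn
  have hexp : exp (-s / 2) ≤ (δ / (2 * n)) ^ 2 := by
    calc exp (-s / 2) ≤ exp (-log (2 * n / δ)) ^ 2 := by
          rw [← exp_nat_mul]; gcongr; push_cast; linarith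
      _ = (δ / (2 * n)) ^ 2 := by rw [exp_neg, exp_log (by positivity), inv_div]
  calc n * (exp (-s / 2) / 2) ≤ n * ((δ / (2 * n)) ^ 2 / 2) := by gcongr
    _ = δ / 8 * (δ / n) := by field_simp; ring
    _ ≤ δ / 8 :=
        mul_le_of_le_one_right (by positivity) (div_le_one_of_le₀ (by linarith) (by linarith))

lemma one_sub_mul_pow_le {K : ℝ} (hn : 1 ≤ n) (hδ0 : 0 < δ) (hδ1 : δ ≤ 1)
    (hK0 : 0 ≤ K) (hK1 : K ≤ 1) (hK : log (2 / δ) ≤ n * K)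
    (hs : 4 * log (2 * n / δ) ≤ s) :
    (1 - K * (1 - exp (-s / 8) / 2)) ^ n ≤ 7 / 8 * δ := by
  have hn' : (1 : ℝ) ≤ n := by exact_mod_cast hn
  set L := log (2 / δ)
  set M := log (2 * n / δ)
  have hL0 : 0 ≤ L := log_nonneg (by rw [le_div_iff₀ hδ0]; linarith)
  have hLM : L ≤ M := log_le_log (by positivity) (by gcongr; linarith)
  have hq : exp (-s / 8) / 2 ≤ exp (-M / 2) / 2 := by gcongr exp ?_ / 2; linarith
  set q := exp (-s / 8) / 2
  have hq0 : 0 ≤ q := by positivity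
  have hq1 : q ≤ 1 / 2 :=
    hq.trans (by linarith [exp_le_one_iff.mpr (by linarith : -M / 2 ≤ 0)])
  have hLq : L * q ≤ 1 / 2 := by
    have hM := le_exp_half M
    calc L * q ≤ M * (exp (-M / 2) / 2) := by gcongr; linarith
      _ = M / exp (M / 2) / 2 := by rw [neg_div, exp_neg]; ring
      _ ≤ 1 / 2 := by gcongr; exact (div_le_one (exp_pos _)).mpr hM
  have hKq : K * (1 - q) ≤ 1 := by nlinarith
  calc (1 - K * (1 - q)) ^ n = (1 - n * (K * (1 - q)) / n) ^ n := by field_simp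
    _ ≤ exp (-(n * (K * (1 - q)))) := one_sub_div_pow_le_exp_neg (by nlinarith)
    _ ≤ exp (-(L * (1 - q))) := exp_le_exp.mpr (by nlinarith)
    _ = δ / 2 * exp (L * q) := by
      rw [show -(L * (1 - q)) = -L + L * q by ring, exp_add, exp_neg, exp_log (by positivity),
        inv_div]
    _ ≤ δ / 2 * exp (1 / 2) := by gcongr
    _ ≤ 7 / 8 * δ := by nlinarith [exp_one_half_lt]

lemma noisy_max_error_le {K : ℝ} (hn : 1 ≤ n) (hδ0 : 0 < δ) (hδ1 : δ ≤ 1)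
    (hK0 : 0 ≤ K) (hK1 : K ≤ 1) (hK : log (2 / δ) ≤ n * K)
    (hs : 4 * log (2 * n / δ) ≤ s) :
    n * (exp (-s / 2) / 2) + (1 - K * (1 - exp (-s / 8) / 2)) ^ n ≤ δ := by
  linarith [natCast_mul_exp_neg_half_le hn hδ0 hδ1 hs,
    one_sub_mul_pow_le hn hδ0 hδ1 hK0 hK1 hK hs]

end ErrorTerms

lemma le_mul_of_inv_mul_rpow_mul_le {c β ε L N K : ℝ} (hc : 0 < c) (hε : 0 < ε) (hL : 0 ≤ L)
    (hN : c⁻¹ * 2 ^ β * ε ^ (-β) * L ≤ N) (hK : c * (ε / 2) ^ β ≤ K) : L ≤ N * K :=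
  calc L = (c⁻¹ * 2 ^ β * ε ^ (-β) * L) * (c * (ε / 2) ^ β) := by
        rw [div_rpow hε.le zero_le_two, rpow_neg hε.le]; field_simp
    _ ≤ N * K :=
        mul_le_mul hN hK (by positivity) ((by positivity : (0 : ℝ) ≤ _ * L).trans hN)

lemma mul_le_sq_mul_of_mul_rpow_neg_two_le {ε A N : ℝ} (hε : 0 < ε)
    (h : 4 * ε ^ (-2 : ℝ) * A ≤ N) : 4 * A ≤ ε ^ 2 * N :=
  calc 4 * A = (4 * ε ^ (-2 : ℝ) * A) * ε ^ 2 := by rw [rpow_neg hε.le, rpow_two]; field_simp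
    _ ≤ N * ε ^ 2 := by gcongr
    _ = ε ^ 2 * N := mul_comm _ _

theorem stmt2_general
    {Ω : Type*} [MeasurableSpace Ω] (P : Measure Ω) [IsProbabilityMeasure P]
    (μ : Measure ℝ) [IsProbabilityMeasure μ]
    (c₁ c₂ β ε δ : ℝ) (hc₁ : 0 < c₁) (hβ : 0 < β)
    (hε : 0 < ε) (hδ0 : 0 < δ) (hδ1 : δ < 1)
    (xmax : ℝ)
    (hreg : ∀ t : ℝ, 0 ≤ t → t ≤ ε →
      c₁ * t ^ β ≤ 1 - (μ (Set.Iic (xmax - t))).toReal ∧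
      1 - (μ (Set.Iic (xmax - t))).toReal ≤ c₂ * t ^ β)
    (n m : ℕ) (X Z : Fin n → Ω → ℝ)
    (hindep : iIndepFun (fun i ω => (X i ω, Z i ω)) P)
    (hlaw : ∀ i, Measure.map (fun ω => (X i ω, Z i ω)) P
      = μ.prod (gaussianReal 0 (1 / (m : ℝ≥0))))
    (hn : c₁⁻¹ * 2 ^ β * ε ^ (-β) * Real.log (2 / δ) ≤ (n : ℝ))
    (hm : 4 * ε ^ (-2 : ℝ) * Real.log (2 * n / δ) ≤ (m : ℝ)) :
    P {ω | |(⨆ i, (X i ω + Z i ω)) - xmax| > ε} ≤ ENNReal.ofReal δ := by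
  have hL : 0 < log (2 / δ) := log_pos (by rw [lt_div_iff₀ hδ0]; linarith)
  have hn1 : 1 ≤ n := Nat.one_le_iff_ne_zero.mpr fun h => by
    subst h; linarith [mul_pos (by positivity : 0 < c₁⁻¹ * 2 ^ β * ε ^ (-β)) hL]
  have hM : 0 < log (2 * n / δ) := by
    have : (1 : ℝ) ≤ n := by exact_mod_cast hn1
    exact log_pos (by rw [lt_div_iff₀ hδ0]; linarith)
  have hm0 : m ≠ 0 := fun h => by
    subst h; linarith [mul_pos (by positivity : 0 < 4 * ε ^ (-2 : ℝ)) hM]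
  have htop : μ (Ioi xmax) = 0 := by
    have h0 := (hreg 0 le_rfl hε.le).2
    rw [zero_rpow hβ.ne', mul_zero, sub_zero] at h0
    rw [← measureReal_eq_zero_iff, ← compl_Iic, probReal_compl_eq_one_sub measurableSet_Iic]
    exact le_antisymm h0 (sub_nonneg.mpr measureReal_le_one)
  have hK : c₁ * (ε / 2) ^ β ≤ μ.real (Ici (xmax - ε / 2)) := by
    refine ((hreg (ε / 2) (by positivity) (by linarith)).1).trans ?_
    rw [← measureReal_def, ← probReal_compl_eq_one_sub measurableSet_Iic, compl_Iic]
    exact measureReal_mono Ioi_subset_Ici_self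
  have : NeZero n := ⟨by omega⟩
  refine (measure_lt_abs_iSup_add_sub_le (by simpa using hm0) hindep
    (fun i => ⟨.of_map_ne_zero (by rw [hlaw i]; exact IsProbabilityMeasure.ne_zero _), hlaw i⟩)
    htop hε.le).trans (ENNReal.ofReal_le_ofReal ?_)
  rw [show ((1 / (m : ℝ≥0) : ℝ≥0) : ℝ) = 1 / m by push_cast; ring,
    show -ε ^ 2 / (2 * (1 / (m : ℝ))) = -(ε ^ 2 * m) / 2 by field_simp,
    show -(ε / 2) ^ 2 / (2 * (1 / (m : ℝ))) = -(ε ^ 2 * m) / 8 by field_simp; ring]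
  exact noisy_max_error_le hn1 hδ0 hδ1.le measureReal_nonneg measureReal_le_one
    (le_mul_of_inv_mul_rpow_mul_le hc₁ hε hL.le hn hK)
    (mul_le_sq_mul_of_mul_rpow_neg_two_le hε hm)

/-- Offline PAC guarantee for maximum estimation: if the CDF of `μ` satisfies
the `β`-regularity condition `1 − F(F⁻¹(1) − t) ∈ [c₁ tᵝ, c₂ tᵝ]` for `0 ≤ t ≤ ε` (where
`xmax = F⁻¹(1)` is the right endpoint of the support), the noisy observations are
`X̂ᵢ = Xᵢ + Ẑᵢ` with `Xᵢ` i.i.d. from `F` and `Ẑᵢ` i.i.d. `N(0,1/m)` independent of the `Xᵢ`,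
`n ≥ c₁⁻¹ 2^β ε^{-β} log(2/δ)` and `m ≥ 4 ε⁻² log(2n/δ)`, then `G = maxᵢ X̂ᵢ` satisfies
`P(|G − F⁻¹(1)| > ε) ≤ δ`. -/
theorem stmt2
    {Ω : Type*} [MeasurableSpace Ω] (P : Measure Ω) [IsProbabilityMeasure P]
    (μ : Measure ℝ) [IsProbabilityMeasure μ]
    (c₁ c₂ β ε δ : ℝ) (hc₁ : 0 < c₁) (hc₁₂ : c₁ < c₂) (hβ : 0 < β)
    (hε : 0 < ε) (hδ0 : 0 < δ) (hδ1 : δ < 1)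
    (xmax : ℝ)
    (hreg : ∀ t : ℝ, 0 ≤ t → t ≤ ε →
      c₁ * t ^ β ≤ 1 - (μ (Set.Iic (xmax - t))).toReal ∧
      1 - (μ (Set.Iic (xmax - t))).toReal ≤ c₂ * t ^ β)
    (n m : ℕ) (X Z : Fin n → Ω → ℝ)
    (hindep : iIndepFun (fun i ω => (X i ω, Z i ω)) P)
    (hlaw : ∀ i, Measure.map (fun ω => (X i ω, Z i ω)) P
      = μ.prod (gaussianReal 0 (1 / (m : ℝ≥0))))
    (hn : c₁⁻¹ * 2 ^ β * ε ^ (-β) * Real.log (2 / δ) ≤ (n : ℝ))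
    (hm : 4 * ε ^ (-2 : ℝ) * Real.log (2 * n / δ) ≤ (m : ℝ)) :
    P {ω | |(⨆ i, (X i ω + Z i ω)) - xmax| > ε} ≤ ENNReal.ofReal δ :=
  stmt2_general P μ c₁ c₂ β ε δ hc₁ hβ hε hδ0 hδ1 xmax hreg n m X Z hindep hlaw hn hm
end

section
/- Let F_β denote the class of distributions F on ℝ satisfying, for some fixed constants 0 < c_1 < c_2 and β > 0, that 1 − F(F^{-1}(1) − t) ∈ [c_1 t^β, c_2 t^β] for all sufficiently small t ≥ 0. For every ε ∈ (0,1/2) there exist absolute constants and pairs F_1, F_2 ∈ F_β with |max(F_1) − max(F_2)| ≥ 2ε such that: (i) W_2(F_1,F_2) = O(ε^{β/2+1}); also there exist such pairs with (ii) W_∞(F_1,F_2) = O(ε); and such pairs with (iii) D_KL(F_1 ‖ F_2) = O(ε^β). -/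
open MeasureTheory ProbabilityTheory Set
open scoped NNReal ENNReal

open Classical in
/-- The Kullback–Leibler divergence `D_KL(μ ‖ ν)`, valued in `ℝ≥0∞`. -/
noncomputable def klDiv {α : Type*} [MeasurableSpace α] (μ ν : Measure α) : ℝ≥0∞ :=
  if μ ≪ ν ∧ Integrable (llr μ ν) μ then ENNReal.ofReal (∫ x, llr μ ν x ∂μ) else ⊤

/-- `γ` is a coupling of `μ` and `ν`. -/
def IsCoupling (γ : Measure (ℝ × ℝ)) (μ ν : Measure ℝ) : Prop :=
  γ.map Prod.fst = μ ∧ γ.map Prod.snd = ν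

/-- The squared Wasserstein-2 distance, valued in `ℝ≥0∞`. -/
noncomputable def wasserstein2Sq (μ ν : Measure ℝ) : ℝ≥0∞ :=
  ⨅ (γ : Measure (ℝ × ℝ)) (_ : IsCoupling γ μ ν),
    ∫⁻ p, ENNReal.ofReal ((p.1 - p.2) ^ 2) ∂γ

/-- The Wasserstein-∞ distance, valued in `ℝ≥0∞`. -/
noncomputable def wassersteinInfty (μ ν : Measure ℝ) : ℝ≥0∞ :=
  ⨅ (γ : Measure (ℝ × ℝ)) (_ : IsCoupling γ μ ν),
    essSup (fun p => ENNReal.ofReal |p.1 - p.2|) γ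

/-- `F⁻¹(1)`, the right endpoint of the support of `μ` (its maximum). -/
noncomputable def supportSup (μ : Measure ℝ) : ℝ :=
  sInf {x : ℝ | μ (Set.Iic x) = 1}

/-- The class `F_β`: probability distributions with
`1 − F(F⁻¹(1) − t) ∈ [c₁ tᵝ, c₂ tᵝ]` for all sufficiently small `t ≥ 0`. -/
def BetaRegular (c₁ c₂ β : ℝ) (μ : Measure ℝ) : Prop :=
  IsProbabilityMeasure μ ∧
  ∃ t₀ > 0, ∀ t : ℝ, 0 ≤ t → t ≤ t₀ →
    c₁ * t ^ β ≤ 1 - (μ (Set.Iic (supportSup μ - t))).toReal ∧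
    1 - (μ (Set.Iic (supportSup μ - t))).toReal ≤ c₂ * t ^ β

/-!
Every example is built from the law of `M - ((1 - U) / c) ^ (1 / β)`, `U` uniform on `(0, 1]`,
whose distribution function is exactly `1 - c (M - x) ^ β` on a left neighbourhood of `M`.

For (i) and (ii), with `δ = 2ε`, push the law with `M = 0`, `c = c₁` forward by the map that fixes
`(-∞, -a]` and compresses `[-a, 0]` affinely onto `[-a, -δ]`. Its tail constant becomes
`c₁ (a / (a - δ)) ^ β`, which is `c₂` for some `a ≍ δ`. The coupling `(squeeze x, x)` moves every
point by at most `δ`, and moves only the mass `c₁ a ^ β ≍ ε ^ β` above `-a`, so `W_∞ ≤ δ` and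
`W₂² ≤ δ² c₁ a ^ β ≍ ε ^ (β + 2)`.

For (iii), compare the law `μ₁` with maximum `-δ` with `(1 - m) μ₁ + m ν`, where `ν` is a `β`-tail
law on `[-t, 0]` with constant `c₁ / m` and `m = c₁ t ^ β ≍ ε ^ β`. The mixture still has tail
constant `c₁` at `0`, and `μ₁` has the constant density `(1 - m)⁻¹` with respect to it, so
`D_KL = -log (1 - m) ≤ 2m`.
-/

section Couplings

variable {α : Type*} [MeasurableSpace α] (ν : Measure α) {f g : α → ℝ}

theorem isCoupling_map_prodMk (hf : Measurable f) (hg : Measurable g) :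
    IsCoupling (ν.map fun x => (f x, g x)) (ν.map f) (ν.map g) :=
  ⟨by rw [Measure.map_map measurable_fst (hf.prodMk hg)]; rfl,
    by rw [Measure.map_map measurable_snd (hf.prodMk hg)]; rfl⟩

theorem wasserstein2Sq_map_le (hf : Measurable f) (hg : Measurable g) :
    wasserstein2Sq (ν.map f) (ν.map g) ≤ ∫⁻ x, ENNReal.ofReal ((f x - g x) ^ 2) ∂ν := by
  refine iInf_le_of_le _ (iInf_le_of_le (isCoupling_map_prodMk ν hf hg) ?_)
  exact (lintegral_map ((measurable_fst.sub measurable_snd).pow_const 2).ennreal_ofReal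
    (hf.prodMk hg)).le

theorem wassersteinInfty_map_le (hf : Measurable f) (hg : Measurable g) {δ : ℝ}
    (h : ∀ᵐ x ∂ν, |f x - g x| ≤ δ) :
    wassersteinInfty (ν.map f) (ν.map g) ≤ ENNReal.ofReal δ := by
  refine iInf_le_of_le _ (iInf_le_of_le (isCoupling_map_prodMk ν hf hg) ?_)
  refine essSup_le_of_ae_le _ ?_
  rw [Filter.EventuallyLE, ae_map_iff (hf.prodMk hg).aemeasurable
    (measurableSet_le (by fun_prop) measurable_const)]
  filter_upwards [h] with x hx using ENNReal.ofReal_le_ofReal hx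

end Couplings

theorem klDiv_smul_add_of_mutuallySingular {α : Type*} [MeasurableSpace α]
    {μ ν : Measure α} [IsProbabilityMeasure μ] [SigmaFinite ν] (hμν : μ ⟂ₘ ν) {r : ℝ}
    (hr : 0 < r) : klDiv μ (ENNReal.ofReal r • μ + ν) = ENNReal.ofReal (-Real.log r) := by
  have hr₀ : ENNReal.ofReal r ≠ 0 := (ENNReal.ofReal_pos.mpr hr).ne'
  have := μ.smul_finite (ENNReal.ofReal_ne_top (r := r))
  have hac_smul : μ ≪ ENNReal.ofReal r • μ := Measure.absolutelyContinuous_smul hr₀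
  have hac : μ ≪ ENNReal.ofReal r • μ + ν := hac_smul.add_right ν
  have hrn : μ.rnDeriv (ENNReal.ofReal r • μ + ν) =ᵐ[μ] fun _ => (ENNReal.ofReal r)⁻¹ := by
    filter_upwards [hac_smul.ae_le (Measure.rnDeriv_add_right_of_mutuallySingular (μ := μ)
        (hμν.smul (ENNReal.ofReal r))),
      Measure.rnDeriv_smul_right_of_ne_top' μ μ hr₀ ENNReal.ofReal_ne_top, μ.rnDeriv_self]
      with x h₁ h₂ h₃
    rw [h₁, h₂, Pi.smul_apply, h₃, smul_eq_mul, mul_one]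
  have hllr : llr μ (ENNReal.ofReal r • μ + ν) =ᵐ[μ] fun _ => -Real.log r := by
    filter_upwards [hrn] with x hx
    rw [llr_def]
    dsimp only
    rw [hx, ENNReal.toReal_inv, ENNReal.toReal_ofReal hr.le, Real.log_inv]
  rw [klDiv, if_pos ⟨hac, (integrable_congr hllr).mpr (integrable_const _)⟩,
    integral_congr_ae hllr, integral_const, probReal_univ, one_smul]

theorem neg_log_one_sub_le_two_mul {m : ℝ} (hm₀ : 0 ≤ m) (hm : m ≤ 1 / 2) :
    -Real.log (1 - m) ≤ 2 * m := by
  have h := Real.one_sub_inv_le_log_of_pos (by linarith : 0 < 1 - m)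
  have : (1 - m)⁻¹ ≤ 1 + 2 * m := by
    rw [inv_le_iff_one_le_mul₀ (by linarith)]; nlinarith
  linarith

theorem supportSup_eq_of_forall_lt {μ : Measure ℝ} {M : ℝ} (hM : μ (Iic M) = 1)
    (hlt : ∀ y < M, μ (Iic y) ≠ 1) : supportSup μ = M :=
  IsLeast.csInf_eq ⟨hM, fun _ hy => not_lt.mp fun h => hlt _ h hy⟩

section DistributionFunction

variable {μ : Measure ℝ} {c c₁ c₂ β M t₀ : ℝ}

theorem supportSup_eq_of_Iic_sub_eq (hβ : 0 < β) (hc : 0 < c) (ht₀ : 0 < t₀)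
    (hμ : ∀ t, 0 ≤ t → t ≤ t₀ → μ (Iic (M - t)) = ENNReal.ofReal (1 - c * t ^ β)) :
    supportSup μ = M := by
  refine supportSup_eq_of_forall_lt ?_ fun y hy => ?_
  · simpa [Real.zero_rpow hβ.ne'] using hμ 0 le_rfl ht₀.le
  · set t := min (M - y) t₀
    have ht : 0 < t := lt_min (sub_pos.mpr hy) ht₀
    refine ne_of_lt ?_
    calc μ (Iic y) ≤ μ (Iic (M - t)) :=
          measure_mono (Iic_subset_Iic.mpr (by linarith [min_le_left (M - y) t₀]))
      _ = ENNReal.ofReal (1 - c * t ^ β) := hμ t ht.le (min_le_right _ _)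
      _ < 1 := ENNReal.ofReal_lt_one.mpr (by nlinarith [Real.rpow_pos_of_pos ht β])

theorem betaRegular_of_Iic_sub_eq [IsProbabilityMeasure μ] (hβ : 0 < β) (hc : 0 < c)
    (hc₁ : c₁ ≤ c) (hc₂ : c ≤ c₂) (ht₀ : 0 < t₀)
    (hμ : ∀ t, 0 ≤ t → t ≤ t₀ → μ (Iic (M - t)) = ENNReal.ofReal (1 - c * t ^ β)) :
    BetaRegular c₁ c₂ β μ := by
  set t₁ := min t₀ (c⁻¹ ^ β⁻¹)
  have ht₁ : 0 < t₁ := lt_min ht₀ (by positivity)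
  refine ⟨inferInstance, t₁, ht₁, fun t ht htt₁ => ?_⟩
  have hct : c * t ^ β ≤ 1 := by
    have := Real.rpow_le_rpow ht (htt₁.trans (min_le_right _ _)) hβ.le
    rw [Real.rpow_inv_rpow (by positivity) hβ.ne'] at this
    calc c * t ^ β ≤ c * c⁻¹ := by gcongr
      _ = 1 := mul_inv_cancel₀ hc.ne'
  rw [supportSup_eq_of_Iic_sub_eq hβ hc ht₀ hμ, hμ t ht (htt₁.trans (min_le_left _ _)),
    ENNReal.toReal_ofReal (by linarith), sub_sub_cancel]
  have := Real.rpow_nonneg ht β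
  exact ⟨by gcongr, by gcongr⟩

end DistributionFunction

noncomputable def tailLaw (M c β : ℝ) : Measure ℝ :=
  (volume.restrict (Ioc (0 : ℝ) 1)).map fun u => M - ((1 - u) / c) ^ β⁻¹

section TailLaw

variable {M c c₁ c₂ β : ℝ}

theorem measurable_tailQuantile (M c β : ℝ) :
    Measurable fun u : ℝ => M - ((1 - u) / c) ^ β⁻¹ := by
  fun_prop

instance (M c β : ℝ) : IsProbabilityMeasure (tailLaw M c β) :=
  have : IsProbabilityMeasure (volume.restrict (Ioc (0 : ℝ) 1)) := ⟨by simp⟩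
  Measure.isProbabilityMeasure_map (measurable_tailQuantile M c β).aemeasurable

theorem tailLaw_Iic_sub (hc : 0 < c) (hβ : 0 < β) {t : ℝ} (ht : 0 ≤ t) :
    tailLaw M c β (Iic (M - t)) = ENNReal.ofReal (1 - c * t ^ β) := by
  have hpre : (fun u : ℝ => M - ((1 - u) / c) ^ β⁻¹) ⁻¹' Iic (M - t) ∩ Ioc 0 1
      = Ioc 0 (1 - c * t ^ β) := by
    ext u
    simp only [mem_inter_iff, mem_preimage, mem_Iic, mem_Ioc, sub_le_sub_iff_left]
    constructor
    · rintro ⟨h, hu₀, hu₁⟩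
      rw [Real.le_rpow_inv_iff_of_pos ht (div_nonneg (by linarith) hc.le) hβ,
        le_div_iff₀ hc] at h
      exact ⟨hu₀, by linarith⟩
    · rintro ⟨hu₀, hu⟩
      have hu₁ : u ≤ 1 := by nlinarith [Real.rpow_nonneg ht β]
      refine ⟨?_, hu₀, hu₁⟩
      rw [Real.le_rpow_inv_iff_of_pos ht (div_nonneg (by linarith) hc.le) hβ, le_div_iff₀ hc]
      linarith
  rw [tailLaw, Measure.map_apply (measurable_tailQuantile M c β) measurableSet_Iic,
    Measure.restrict_apply (measurable_tailQuantile M c β measurableSet_Iic), hpre,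
    Real.volume_Ioc, sub_zero]

theorem tailLaw_Iic_of_le (hc : 0 < c) (hβ : 0 < β) {x : ℝ} (hx : M ≤ x) :
    tailLaw M c β (Iic x) = 1 := by
  refine le_antisymm prob_le_one ?_
  calc 1 = tailLaw M c β (Iic (M - 0)) := by
        rw [tailLaw_Iic_sub hc hβ le_rfl, Real.zero_rpow hβ.ne']; simp
    _ ≤ tailLaw M c β (Iic x) := measure_mono (Iic_subset_Iic.mpr (by linarith))

theorem supportSup_tailLaw (hc : 0 < c) (hβ : 0 < β) : supportSup (tailLaw M c β) = M :=
  supportSup_eq_of_Iic_sub_eq hβ hc one_pos fun _ ht _ => tailLaw_Iic_sub hc hβ ht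

theorem betaRegular_tailLaw (hc₁ : 0 < c₁) (hc₁₂ : c₁ ≤ c₂) (hβ : 0 < β) :
    BetaRegular c₁ c₂ β (tailLaw M c₁ β) :=
  betaRegular_of_Iic_sub_eq hβ hc₁ le_rfl hc₁₂ one_pos fun _ ht _ => tailLaw_Iic_sub hc₁ hβ ht

theorem tailLaw_Ioi (hc : 0 < c) (hβ : 0 < β) : tailLaw M c β (Ioi M) = 0 := by
  rw [← compl_Iic, prob_compl_eq_zero_iff measurableSet_Iic, tailLaw_Iic_of_le hc hβ le_rfl]

theorem tailLaw_Ioi_sub_le (hc : 0 < c) (hβ : 0 < β) {t : ℝ} (ht : 0 ≤ t) :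
    tailLaw M c β (Ioi (M - t)) ≤ ENNReal.ofReal (c * t ^ β) := by
  rw [← compl_Iic, prob_compl_eq_one_sub measurableSet_Iic, tailLaw_Iic_sub hc hβ ht,
    tsub_le_iff_right]
  calc (1 : ℝ≥0∞) = ENNReal.ofReal (c * t ^ β + (1 - c * t ^ β)) := by simp
    _ ≤ _ := ENNReal.ofReal_add_le

theorem tailLaw_Iic_sub_eq_zero (hc : 0 < c) (hβ : 0 < β) {t : ℝ} (ht : 0 ≤ t)
    (hct : 1 ≤ c * t ^ β) : tailLaw M c β (Iic (M - t)) = 0 := by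
  rw [tailLaw_Iic_sub hc hβ ht, ENNReal.ofReal_eq_zero]
  linarith

theorem ae_le_tailLaw (hc : 0 < c) (hβ : 0 < β) : ∀ᵐ x ∂tailLaw M c β, x ≤ M :=
  measure_mono_null (fun x (hx : ¬x ≤ M) => not_le.mp hx) (tailLaw_Ioi hc hβ)

end TailLaw

noncomputable def squeeze (a δ x : ℝ) : ℝ := x - δ * max 0 (x + a) / a

section Squeeze

variable {a δ x : ℝ}

theorem measurable_squeeze (a δ : ℝ) : Measurable (squeeze a δ) := by
  unfold squeeze
  fun_prop

theorem squeeze_of_le (hx : x ≤ -a) : squeeze a δ x = x := by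
  simp [squeeze, max_eq_left (by linarith : x + a ≤ 0)]

theorem abs_squeeze_sub_le (ha : 0 < a) (hδ : 0 ≤ δ) (hx : x ≤ 0) :
    |squeeze a δ x - x| ≤ δ := by
  rcases le_total x (-a) with hxa | hxa
  · simpa [squeeze_of_le hxa] using hδ
  · have hpos : 0 ≤ δ * (x + a) / a := div_nonneg (mul_nonneg hδ (by linarith)) ha.le
    have hle : δ * (x + a) / a ≤ δ := by
      rw [div_le_iff₀ ha]; nlinarith
    rw [squeeze, max_eq_right (by linarith : 0 ≤ x + a), sub_sub_cancel_left, abs_neg,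
      abs_of_nonneg hpos]
    exact hle

theorem squeeze_preimage_Iic (hδ : 0 ≤ δ) (hδa : δ < a) {s : ℝ} (hsa : s ≤ a - δ) :
    squeeze a δ ⁻¹' Iic (-δ - s) = Iic (-(a / (a - δ) * s)) := by
  have ha : 0 < a := hδ.trans_lt hδa
  have haδ : 0 < a - δ := sub_pos.mpr hδa
  have hρs : a / (a - δ) * s ≤ a := by
    rw [div_mul_eq_mul_div, div_le_iff₀ haδ]; nlinarith
  ext x
  simp only [mem_preimage, mem_Iic]
  rcases le_total x (-a) with hxa | hxa
  · rw [squeeze_of_le hxa]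
    constructor <;> intro <;> linarith
  · rw [squeeze, max_eq_right (by linarith : 0 ≤ x + a),
      show x - δ * (x + a) / a = (a - δ) / a * x - δ by field_simp; ring,
      show -(a / (a - δ) * s) = -s / ((a - δ) / a) by field_simp, le_div_iff₀ (by positivity)]
    constructor <;> intro <;> linarith

end Squeeze

section WassersteinPair

variable {c₁ c₂ β a δ : ℝ}

theorem squeeze_tailLaw_Iic_sub (hc₁ : 0 < c₁) (hβ : 0 < β) (hδ : 0 ≤ δ) (hδa : δ < a)
    {s : ℝ} (hs : 0 ≤ s) (hsa : s ≤ a - δ) :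
    (tailLaw 0 c₁ β).map (squeeze a δ) (Iic (-δ - s))
      = ENNReal.ofReal (1 - c₁ * (a / (a - δ)) ^ β * s ^ β) := by
  have hρ : 0 ≤ a / (a - δ) := div_nonneg (by linarith) (by linarith)
  rw [Measure.map_apply (measurable_squeeze a δ) measurableSet_Iic,
    squeeze_preimage_Iic hδ hδa hsa, ← zero_sub, tailLaw_Iic_sub hc₁ hβ (by positivity),
    Real.mul_rpow hρ hs, mul_assoc]

theorem exists_pair_wasserstein_le (hc₁ : 0 < c₁) (hβ : 0 < β) (hδ : 0 < δ) (hδa : δ < a)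
    (hc₂ : c₁ * (a / (a - δ)) ^ β ≤ c₂) :
    ∃ μ₁ μ₂ : Measure ℝ, BetaRegular c₁ c₂ β μ₁ ∧ BetaRegular c₁ c₂ β μ₂ ∧
      δ ≤ |supportSup μ₁ - supportSup μ₂| ∧
      wasserstein2Sq μ₁ μ₂ ≤ ENNReal.ofReal (δ ^ 2 * (c₁ * a ^ β)) ∧
      wassersteinInfty μ₁ μ₂ ≤ ENNReal.ofReal δ := by
  set μ₀ := tailLaw 0 c₁ β
  have ha : 0 < a := hδ.trans hδa
  have hc₁₂ : c₁ ≤ c₁ * (a / (a - δ)) ^ β :=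
    le_mul_of_one_le_right hc₁.le (Real.one_le_rpow
      ((one_le_div (by linarith)).mpr (by linarith)) hβ.le)
  have hcdf : ∀ s, 0 ≤ s → s ≤ a - δ → μ₀.map (squeeze a δ) (Iic (-δ - s))
      = ENNReal.ofReal (1 - c₁ * (a / (a - δ)) ^ β * s ^ β) :=
    fun s hs hsa => squeeze_tailLaw_Iic_sub hc₁ hβ hδ.le hδa hs hsa
  have hpos : 0 < c₁ * (a / (a - δ)) ^ β := hc₁.trans_le hc₁₂
  have := Measure.isProbabilityMeasure_map (μ := μ₀) (measurable_squeeze a δ).aemeasurable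
  have hdisp : ∀ᵐ x ∂μ₀, |squeeze a δ x - id x| ≤ δ := by
    filter_upwards [ae_le_tailLaw hc₁ hβ] with x hx using abs_squeeze_sub_le ha hδ.le hx
  refine ⟨μ₀.map (squeeze a δ), μ₀.map id,
    betaRegular_of_Iic_sub_eq hβ hpos hc₁₂ hc₂ (sub_pos.mpr hδa) hcdf,
    by rw [Measure.map_id]; exact betaRegular_tailLaw hc₁ (hc₁₂.trans hc₂) hβ, ?_, ?_,
    wassersteinInfty_map_le μ₀ (measurable_squeeze a δ) measurable_id hdisp⟩
  · rw [supportSup_eq_of_Iic_sub_eq hβ hpos (sub_pos.mpr hδa) hcdf, Measure.map_id,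
      supportSup_tailLaw hc₁ hβ, sub_zero, abs_neg, abs_of_pos hδ]
  · refine (wasserstein2Sq_map_le μ₀ (measurable_squeeze a δ) measurable_id).trans ?_
    calc ∫⁻ x, ENNReal.ofReal ((squeeze a δ x - id x) ^ 2) ∂μ₀
        ≤ ∫⁻ x, (Ioi (-a)).indicator (fun _ => ENNReal.ofReal (δ ^ 2)) x ∂μ₀ := by
          refine lintegral_mono_ae ?_
          filter_upwards [hdisp] with x hx
          rcases le_or_gt x (-a) with hxa | hxa
          · simp [squeeze_of_le hxa]
          · rw [indicator_of_mem (mem_Ioi.mpr hxa)]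
            exact ENNReal.ofReal_le_ofReal (sq_le_sq' (abs_le.mp hx).1 (abs_le.mp hx).2)
      _ = ENNReal.ofReal (δ ^ 2) * μ₀ (Ioi (-a)) := lintegral_indicator_const measurableSet_Ioi _
      _ ≤ ENNReal.ofReal (δ ^ 2) * ENNReal.ofReal (c₁ * a ^ β) := by
          gcongr; simpa using tailLaw_Ioi_sub_le (M := 0) hc₁ hβ ha.le
      _ = ENNReal.ofReal (δ ^ 2 * (c₁ * a ^ β)) := (ENNReal.ofReal_mul (by positivity)).symm

theorem exists_pair_wasserstein_le_rpow (hc₁ : 0 < c₁) (hβ : 0 < β) {ρ : ℝ} (hρ : 1 < ρ)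
    (hc₂ : c₁ * ρ ^ β ≤ c₂) (hδ : 0 < δ) :
    ∃ μ₁ μ₂ : Measure ℝ, BetaRegular c₁ c₂ β μ₁ ∧ BetaRegular c₁ c₂ β μ₂ ∧
      δ ≤ |supportSup μ₁ - supportSup μ₂| ∧
      wasserstein2Sq μ₁ μ₂ ≤ ENNReal.ofReal (c₁ * (ρ / (ρ - 1)) ^ β * δ ^ (β + 2)) ∧
      wassersteinInfty μ₁ μ₂ ≤ ENNReal.ofReal δ := by
  have hρ₁ : 0 < ρ - 1 := sub_pos.mpr hρ
  have hδa : δ < ρ / (ρ - 1) * δ := by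
    rw [div_mul_eq_mul_div, lt_div_iff₀ hρ₁]; nlinarith
  have hratio : ρ / (ρ - 1) * δ / (ρ / (ρ - 1) * δ - δ) = ρ := by
    field_simp
    ring
  have hbound : δ ^ 2 * (c₁ * (ρ / (ρ - 1) * δ) ^ β)
      = c₁ * (ρ / (ρ - 1)) ^ β * δ ^ (β + 2) := by
    rw [Real.mul_rpow (by positivity) hδ.le, Real.rpow_add hδ, Real.rpow_two]
    ring
  rw [← hbound]
  exact exists_pair_wasserstein_le hc₁ hβ hδ hδa (by rwa [hratio])

end WassersteinPair

section KLPair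

variable {M M' c c' c₁ c₂ β m δ : ℝ}

theorem mutuallySingular_tailLaw (hc : 0 < c) (hc' : 0 < c') (hβ : 0 < β) {t : ℝ} (ht : 0 ≤ t)
    (hct : 1 ≤ c * t ^ β) (hM : M' ≤ M - t) : tailLaw M' c' β ⟂ₘ tailLaw M c β :=
  Measure.MutuallySingular.mk (tailLaw_Ioi hc' hβ)
    (measure_mono_null (Iic_subset_Iic.mpr hM) (tailLaw_Iic_sub_eq_zero hc hβ ht hct))
    (by simp [union_comm])

theorem smul_add_smul_tailLaw_Iic_sub (hc : 0 < c) (hβ : 0 < β) (hm : 0 < m) (hm₁ : m ≤ 1)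
    {t : ℝ} (ht : 0 ≤ t) (hct : c * t ^ β ≤ m) (hM : M' ≤ M - t) :
    (ENNReal.ofReal (1 - m) • tailLaw M' c β + ENNReal.ofReal m • tailLaw M (c / m) β)
      (Iic (M - t)) = ENNReal.ofReal (1 - c * t ^ β) := by
  have hct' : c / m * t ^ β ≤ 1 := by rwa [div_mul_eq_mul_div, div_le_one hm]
  simp only [Measure.add_apply, Measure.smul_apply, smul_eq_mul]
  rw [tailLaw_Iic_sub (div_pos hc hm) hβ ht, tailLaw_Iic_of_le hc hβ hM, mul_one,
    ← ENNReal.ofReal_mul hm.le, ← ENNReal.ofReal_add (by linarith) (by nlinarith)]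
  congr 1
  field_simp
  ring

theorem exists_pair_klDiv_le (hc₁ : 0 < c₁) (hc₁₂ : c₁ ≤ c₂) (hβ : 0 < β) (hδ : 0 < δ) :
    ∃ μ₁ μ₂ : Measure ℝ, BetaRegular c₁ c₂ β μ₁ ∧ BetaRegular c₁ c₂ β μ₂ ∧
      δ ≤ |supportSup μ₁ - supportSup μ₂| ∧
      klDiv μ₁ μ₂ ≤ ENNReal.ofReal (2 * (c₁ * δ ^ β)) := by
  set m := min (1 / 2) (c₁ * δ ^ β)
  have hm : 0 < m := lt_min one_half_pos (by positivity)
  have hm_half : m ≤ 1 / 2 := min_le_left _ _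
  have hmδ : m ≤ c₁ * δ ^ β := min_le_right _ _
  set t₁ := (m / c₁) ^ β⁻¹
  have ht₁ : 0 < t₁ := by positivity
  have hmt₁ : c₁ * t₁ ^ β = m := by
    rw [Real.rpow_inv_rpow (by positivity) hβ.ne']; field_simp
  have ht₁δ : t₁ ≤ δ := by
    rw [Real.rpow_inv_le_iff_of_pos (by positivity) hδ.le hβ, div_le_iff₀ hc₁]; linarith
  set μ₁ := tailLaw (-δ) c₁ β
  set ν := tailLaw 0 (c₁ / m) β
  set μ₂ := ENNReal.ofReal (1 - m) • μ₁ + ENNReal.ofReal m • ν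
  have hμ₂ : IsProbabilityMeasure μ₂ := ⟨by
    simp only [μ₂, Measure.add_apply, Measure.smul_apply, measure_univ, smul_eq_mul, mul_one]
    rw [← ENNReal.ofReal_add (by linarith) hm.le, sub_add_cancel, ENNReal.ofReal_one]⟩
  have hcdf : ∀ t, 0 ≤ t → t ≤ t₁ → μ₂ (Iic (0 - t)) = ENNReal.ofReal (1 - c₁ * t ^ β) :=
    fun t ht htt₁ => smul_add_smul_tailLaw_Iic_sub hc₁ hβ hm (by linarith) ht
      (hmt₁ ▸ mul_le_mul_of_nonneg_left (Real.rpow_le_rpow ht htt₁ hβ.le) hc₁.le) (by linarith)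
  have hsing : μ₁ ⟂ₘ ν := mutuallySingular_tailLaw (div_pos hc₁ hm) hc₁ hβ ht₁.le
    (by rw [div_mul_eq_mul_div, hmt₁, div_self hm.ne']) (by linarith)
  refine ⟨μ₁, μ₂, betaRegular_tailLaw hc₁ hc₁₂ hβ,
    betaRegular_of_Iic_sub_eq hβ hc₁ le_rfl hc₁₂ ht₁ hcdf, ?_, ?_⟩
  · rw [supportSup_tailLaw hc₁ hβ, supportSup_eq_of_Iic_sub_eq hβ hc₁ ht₁ hcdf, sub_zero,
      abs_neg, abs_of_pos hδ]
  · have := ν.smul_finite (ENNReal.ofReal_ne_top (r := m))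
    rw [klDiv_smul_add_of_mutuallySingular (hsing.symm.smul _).symm (by linarith)]
    exact ENNReal.ofReal_le_ofReal
      ((neg_log_one_sub_le_two_mul hm.le hm_half).trans (by linarith))

end KLPair

/-- For fixed `0 < c₁ < c₂` and `β > 0` there is a constant `C > 0` such
that for every `ε ∈ (0,1/2)` there are pairs `F₁, F₂ ∈ F_β` with
`|max(F₁) − max(F₂)| ≥ 2ε` and (i) `W₂(F₁,F₂) ≤ C ε^{β/2+1}`; pairs with (ii)
`W_∞(F₁,F₂) ≤ C ε`; and pairs with (iii) `D_KL(F₁‖F₂) ≤ C ε^β`. -/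
theorem stmt7
    (c₁ c₂ β : ℝ) (hc₁ : 0 < c₁) (hc₁₂ : c₁ < c₂) (hβ : 0 < β) :
    ∃ C : ℝ, 0 < C ∧ ∀ ε : ℝ, 0 < ε → ε < 1 / 2 →
      (∃ μ₁ μ₂ : Measure ℝ, BetaRegular c₁ c₂ β μ₁ ∧ BetaRegular c₁ c₂ β μ₂ ∧
        2 * ε ≤ |supportSup μ₁ - supportSup μ₂| ∧
        wasserstein2Sq μ₁ μ₂ ≤ ENNReal.ofReal ((C * ε ^ (β / 2 + 1)) ^ 2)) ∧
      (∃ μ₁ μ₂ : Measure ℝ, BetaRegular c₁ c₂ β μ₁ ∧ BetaRegular c₁ c₂ β μ₂ ∧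
        2 * ε ≤ |supportSup μ₁ - supportSup μ₂| ∧
        wassersteinInfty μ₁ μ₂ ≤ ENNReal.ofReal (C * ε)) ∧
      (∃ μ₁ μ₂ : Measure ℝ, BetaRegular c₁ c₂ β μ₁ ∧ BetaRegular c₁ c₂ β μ₂ ∧
        2 * ε ≤ |supportSup μ₁ - supportSup μ₂| ∧
        klDiv μ₁ μ₂ ≤ ENNReal.ofReal (C * ε ^ β)) := by
  have hρ : 1 < (c₂ / c₁) ^ β⁻¹ :=
    Real.one_lt_rpow ((one_lt_div hc₁).mpr hc₁₂) (inv_pos.mpr hβ)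
  have hρβ : c₁ * ((c₂ / c₁) ^ β⁻¹) ^ β = c₂ := by
    rw [Real.rpow_inv_rpow (div_pos (hc₁.trans hc₁₂) hc₁).le hβ.ne']
    field_simp
  set ρ := (c₂ / c₁) ^ β⁻¹
  have hA : 0 ≤ c₁ * (ρ / (ρ - 1)) ^ β * 2 ^ (β + 2) := by
    have : 0 < ρ - 1 := sub_pos.mpr hρ
    positivity
  have hB : 0 ≤ 2 * c₁ * 2 ^ β := by positivity
  set A := c₁ * (ρ / (ρ - 1)) ^ β * 2 ^ (β + 2)
  set B := 2 * c₁ * 2 ^ β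
  refine ⟨2 + A + B, by positivity, fun ε hε _ => ?_⟩
  have hδ : 0 < 2 * ε := by positivity
  obtain ⟨μ₁, μ₂, hμ₁, hμ₂, hgap, hW₂, hWinf⟩ :=
    exists_pair_wasserstein_le_rpow hc₁ hβ hρ hρβ.le hδ
  obtain ⟨ν₁, ν₂, hν₁, hν₂, hgap', hKL⟩ := exists_pair_klDiv_le hc₁ hc₁₂.le hβ hδ
  refine ⟨⟨μ₁, μ₂, hμ₁, hμ₂, hgap, hW₂.trans (ENNReal.ofReal_le_ofReal ?_)⟩,
    ⟨μ₁, μ₂, hμ₁, hμ₂, hgap, hWinf.trans (ENNReal.ofReal_le_ofReal (by nlinarith))⟩,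
    ⟨ν₁, ν₂, hν₁, hν₂, hgap', hKL.trans (ENNReal.ofReal_le_ofReal ?_)⟩⟩
  · calc c₁ * (ρ / (ρ - 1)) ^ β * (2 * ε) ^ (β + 2) = A * ε ^ (β + 2) := by
          rw [Real.mul_rpow zero_le_two hε.le]; ring
      _ ≤ (2 + A + B) ^ 2 * ε ^ (β + 2) := by gcongr; nlinarith
      _ = ((2 + A + B) * ε ^ (β / 2 + 1)) ^ 2 := by
          rw [mul_pow, ← Real.rpow_two (ε ^ _), ← Real.rpow_mul hε.le]
          ring_nf
  · calc 2 * (c₁ * (2 * ε) ^ β) = B * ε ^ β := by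
          rw [Real.mul_rpow zero_le_two hε.le]; ring
      _ ≤ (2 + A + B) * ε ^ β := by gcongr; linarith
end

section
/- Let F be a cumulative distribution function on ℝ with density ρ = F', let η ∈ ℝ, and suppose there exist c_1, t_1 > 0 with ρ(t) ≥ c_1 for all t ∈ [η − t_1, η + t_1]. If m ∈ ℕ satisfies m^{-1/2} ≤ t_1/2, then the density ρ_m = ρ * φ_{1/m} of the convolution F * N(0,1/m) satisfies ρ_m(x) ≥ c_1/4 for all x ∈ [η − t_1, η + t_1]. -/
open MeasureTheory ProbabilityTheory Set
open scoped NNReal ENNReal Real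

lemma gauss_half (v : ℝ≥0) (hv : v ≠ 0) :
    ∫ z in Set.Ioi (0:ℝ), gaussianPDFReal 0 v z = 1/2 := by
  have hvr : (0:ℝ) < (v:ℝ) := by positivity
  have h1 : ∀ z : ℝ, gaussianPDFReal 0 v z
      = (Real.sqrt (2 * π * v))⁻¹ * Real.exp (-(2 * (v:ℝ))⁻¹ * z ^ 2) := by
    intro z
    rw [gaussianPDFReal]
    ring_nf
  simp_rw [h1]
  rw [integral_const_mul, integral_gaussian_Ioi]
  have : π / (2 * (v:ℝ))⁻¹ = 2 * π * v := by field_simp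
  rw [this]
  have h2 : (0:ℝ) < Real.sqrt (2 * π * v) := Real.sqrt_pos.mpr (by positivity)
  field_simp

lemma gauss_tail (v : ℝ≥0) (hv : v ≠ 0) (t₁ : ℝ) (ht₁ : 0 < t₁)
    (hσ : Real.sqrt v ≤ t₁ / 2) :
    ∫ z in Set.Ioi t₁, gaussianPDFReal 0 v z ≤ 1/4 := by
  have hvr : (0:ℝ) < (v:ℝ) := by positivity
  set C : ℝ := (Real.sqrt (2 * π * v))⁻¹ with hC
  set b : ℝ := t₁ / (2 * v) with hb
  have hbpos : 0 < b := by positivity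
  have hCpos : 0 < C := by
    rw [hC]; positivity
  -- pointwise bound
  have hpt : ∀ z ∈ Set.Ioi t₁, gaussianPDFReal 0 v z ≤ C * Real.exp (-(b * z)) := by
    intro z hz
    simp only [Set.mem_Ioi] at hz
    rw [gaussianPDFReal]
    apply mul_le_mul_of_nonneg_left _ hCpos.le
    apply Real.exp_le_exp.mpr
    rw [sub_zero]
    rw [neg_div, neg_le_neg_iff, hb]
    rw [div_mul_eq_mul_div, div_le_div_iff₀ (by positivity) (by positivity)]
    nlinarith [mul_pos ht₁ hvr, sq_nonneg (z - t₁), mul_pos (sub_pos.mpr hz) hvr]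
  -- integral of the bound
  have hIb : ∫ z in Set.Ioi t₁, C * Real.exp (-(b * z)) = C * (b⁻¹ * Real.exp (-(b * t₁))) := by
    rw [integral_const_mul]
    congr 1
    have := integral_comp_mul_left_Ioi (fun y => Real.exp (-y)) t₁ hbpos
    simp only [smul_eq_mul] at this
    rw [this, integral_exp_neg_Ioi]
  have hint1 : IntegrableOn (fun z => C * Real.exp (-(b * z))) (Set.Ioi t₁) := by
    simp_rw [neg_mul_eq_neg_mul]
    exact (exp_neg_integrableOn_Ioi t₁ hbpos).const_mul C
  have hint0 : IntegrableOn (gaussianPDFReal 0 v) (Set.Ioi t₁) :=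
    (integrable_gaussianPDFReal 0 v).integrableOn
  have step : ∫ z in Set.Ioi t₁, gaussianPDFReal 0 v z
      ≤ ∫ z in Set.Ioi t₁, C * Real.exp (-(b * z)) :=
    setIntegral_mono_on hint0 hint1 measurableSet_Ioi hpt
  rw [hIb] at step
  refine step.trans ?_
  -- now bound C * (b⁻¹ * exp (-(b*t₁))) ≤ 1/4
  set s : ℝ := Real.sqrt v with hs
  have hspos : 0 < s := Real.sqrt_pos.mpr hvr
  have hs2 : s ^ 2 = (v:ℝ) := Real.sq_sqrt hvr.le
  have hst : 2 * s ≤ t₁ := by linarith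
  have hbt : (2:ℝ) ≤ b * t₁ := by
    rw [hb]
    rw [div_mul_eq_mul_div, le_div_iff₀ (by positivity)]
    nlinarith [hs2, hst, hspos.le, sq_nonneg s]
  have hexp : Real.exp (-(b * t₁)) ≤ Real.exp (-2) := by
    apply Real.exp_le_exp.mpr; linarith
  have hCb : C * b⁻¹ ≤ 1 := by
    have hsqrt : Real.sqrt (2 * π * v) ≥ s := by
      rw [hs]
      apply Real.sqrt_le_sqrt
      nlinarith [Real.pi_gt_three]
    have hbinv : b⁻¹ = 2 * (v:ℝ) / t₁ := by rw [hb]; field_simp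
    have h1 : C ≤ s⁻¹ := by
      rw [hC]
      exact inv_anti₀ hspos hsqrt
    have h2 : 2 * (v:ℝ) / t₁ ≤ s := by
      rw [div_le_iff₀ ht₁, ← hs2]; nlinarith
    calc C * b⁻¹ ≤ s⁻¹ * s := by
          rw [hbinv]
          exact mul_le_mul h1 h2 (by positivity) (by positivity)
    _ = 1 := inv_mul_cancel₀ hspos.ne'
  have hexp2 : Real.exp (-2) ≤ 1/4 := by
    rw [Real.exp_neg, inv_le_comm₀ (Real.exp_pos 2) (by norm_num)]
    have h := Real.exp_one_gt_d9
    calc ((1:ℝ)/4)⁻¹ = 2 * 2 := by norm_num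
    _ ≤ Real.exp 1 * Real.exp 1 := by nlinarith
    _ = Real.exp 2 := by rw [← Real.exp_add]; norm_num
  calc C * (b⁻¹ * Real.exp (-(b * t₁))) = (C * b⁻¹) * Real.exp (-(b * t₁)) := by ring
  _ ≤ 1 * (1/4) := by
      apply mul_le_mul hCb (hexp.trans hexp2) (Real.exp_pos _).le (by norm_num)
  _ = 1/4 := by norm_num

lemma gauss_Ioc (v : ℝ≥0) (hv : v ≠ 0) (t₁ : ℝ) (ht₁ : 0 < t₁)
    (hσ : Real.sqrt v ≤ t₁ / 2)
    (hhalf : ∫ z in Set.Ioi (0:ℝ), gaussianPDFReal 0 v z = 1/2)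
    (htail : ∫ z in Set.Ioi t₁, gaussianPDFReal 0 v z ≤ 1/4) :
    (1:ℝ)/4 ≤ ∫ z in Set.Ioc (0:ℝ) t₁, gaussianPDFReal 0 v z := by
  have hint : Integrable (gaussianPDFReal 0 v) := integrable_gaussianPDFReal 0 v
  have hsplit : ∫ z in Set.Ioi (0:ℝ), gaussianPDFReal 0 v z
      = (∫ z in Set.Ioc (0:ℝ) t₁, gaussianPDFReal 0 v z)
        + ∫ z in Set.Ioi t₁, gaussianPDFReal 0 v z := by
    rw [← setIntegral_union (Set.Ioc_disjoint_Ioi le_rfl) measurableSet_Ioi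
      hint.integrableOn hint.integrableOn, Set.Ioc_union_Ioi_eq_Ioi ht₁.le]
  rw [hhalf] at hsplit
  linarith

lemma gauss_Ioc_neg (v : ℝ≥0) (t₁ : ℝ) :
    ∫ z in Set.Ioc (-t₁) (0:ℝ), gaussianPDFReal 0 v z
      = ∫ z in Set.Ioc (0:ℝ) t₁, gaussianPDFReal 0 v z := by
  have heven : ∀ z : ℝ, gaussianPDFReal 0 v (-z) = gaussianPDFReal 0 v z := by
    intro z; rw [gaussianPDFReal, gaussianPDFReal]; ring_nf
  rcases le_or_gt t₁ 0 with h | h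
  · rw [Set.Ioc_eq_empty (by simpa using h), Set.Ioc_eq_empty (by simpa using h)]
  · rw [← intervalIntegral.integral_of_le (by linarith : -t₁ ≤ (0:ℝ)),
      ← intervalIntegral.integral_of_le h.le]
    have := intervalIntegral.integral_comp_neg (a := (0:ℝ)) (b := t₁)
      (f := gaussianPDFReal 0 v)
    simp only [neg_zero] at this
    rw [← this]
    simp_rw [heven]

/-- Let `ρ = F'` be the density of a distribution `F` on `ℝ`, with
`ρ(t) ≥ c₁` for all `t ∈ [η − t₁, η + t₁]`.  If `m^{-1/2} ≤ t₁/2`, then the density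
`ρ_m(x) = ∫ ρ(x − z) φ_{1/m}(z) dz` of `F * N(0,1/m)` satisfies `ρ_m(x) ≥ c₁/4` for all
`x ∈ [η − t₁, η + t₁]`. -/
theorem stmt14
    (ρ : ℝ → ℝ) (hρ_meas : Measurable ρ) (hρ_nonneg : ∀ y, 0 ≤ ρ y)
    (hρ_int : ∫ y, ρ y = 1)
    (η c₁ t₁ : ℝ) (hc₁ : 0 < c₁) (ht₁ : 0 < t₁)
    (hlow : ∀ t ∈ Set.Icc (η - t₁) (η + t₁), c₁ ≤ ρ t)
    (m : ℕ) (hm : 1 / Real.sqrt m ≤ t₁ / 2) :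
    ∀ x ∈ Set.Icc (η - t₁) (η + t₁),
      c₁ / 4 ≤ ∫ z, ρ (x - z) ∂(gaussianReal 0 (1 / (m : ℝ≥0))) := by
  intro x hx
  rcases Nat.eq_zero_or_pos m with hm0 | hm1
  · subst hm0
    simp only [Nat.cast_zero, div_zero, gaussianReal_zero_var]
    rw [integral_dirac]
    simp only [sub_zero]
    have := hlow x hx
    linarith
  -- main case
  set v : ℝ≥0 := 1 / (m : ℝ≥0) with hvdef
  have hmpos : (0:ℝ) < (m:ℝ) := by exact_mod_cast hm1
  have hv : v ≠ 0 := by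
    rw [hvdef]
    positivity
  have hvr : ((v:ℝ)) = 1 / (m:ℝ) := by
    rw [hvdef]; push_cast; ring
  have hσ : Real.sqrt v ≤ t₁ / 2 := by
    rw [hvr, one_div, Real.sqrt_inv, ← one_div]
    exact hm
  set w : ℝ → ℝ := gaussianPDFReal 0 v with hw
  have hw_nonneg : ∀ z, 0 ≤ w z := gaussianPDFReal_nonneg 0 v
  have hw_meas : Measurable w := measurable_gaussianPDFReal 0 v
  -- rewrite the integral against the Gaussian measure
  have heq : ∫ z, ρ (x - z) ∂(gaussianReal 0 v)
      = ∫ z, (w z).toNNReal • ρ (x - z) := by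
    rw [gaussianReal_of_var_ne_zero 0 hv]
    have hid : volume.withDensity (gaussianPDF 0 v)
        = volume.withDensity (fun z => ((w z).toNNReal : ℝ≥0∞)) := rfl
    rw [hid, integral_withDensity_eq_integral_smul (hw_meas.real_toNNReal)]
  have hsmul : ∀ z : ℝ, (w z).toNNReal • ρ (x - z) = w z * ρ (x - z) := by
    intro z
    rw [NNReal.smul_def, Real.coe_toNNReal _ (hw_nonneg z), smul_eq_mul]
  rw [heq]
  simp_rw [hsmul]
  -- integrability
  have hρi : Integrable ρ := integrable_of_integral_eq_one hρ_int
  have h1 : Integrable (fun z => ρ (x - z)) := hρi.comp_sub_left x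
  set C : ℝ := (Real.sqrt (2 * π * (v:ℝ)))⁻¹ with hC
  have hCpos : 0 < C := by rw [hC]; positivity
  have hwle : ∀ z, w z ≤ C := by
    intro z
    rw [hw, gaussianPDFReal]
    calc (Real.sqrt (2 * π * (v:ℝ)))⁻¹ * Real.exp (-(z - 0) ^ 2 / (2 * (v:ℝ)))
        ≤ (Real.sqrt (2 * π * (v:ℝ)))⁻¹ * 1 := by
          apply mul_le_mul_of_nonneg_left _ (by positivity)
          apply Real.exp_le_one_iff.mpr
          have : (0:ℝ) < (v:ℝ) := by positivity
          apply div_nonpos_of_nonpos_of_nonneg (neg_nonpos_of_nonneg (sq_nonneg _))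
          positivity
    _ = C := by rw [hC, mul_one]
  have h2 : Integrable (fun z => w z * ρ (x - z)) := by
    apply Integrable.mono' (h1.const_mul C)
    · exact (hw_meas.mul
        (hρ_meas.comp (measurable_const.sub measurable_id))).aestronglyMeasurable
    · filter_upwards with z
      rw [Real.norm_eq_abs, abs_of_nonneg (mul_nonneg (hw_nonneg z) (hρ_nonneg _))]
      exact mul_le_mul_of_nonneg_right (hwle z) (hρ_nonneg _)
  -- choose the interval
  obtain ⟨hx1, hx2⟩ := hx
  obtain ⟨S, hS_meas, hS_sub, hS_meas_ge⟩ :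
      ∃ S : Set ℝ, MeasurableSet S ∧ (∀ z ∈ S, x - z ∈ Set.Icc (η - t₁) (η + t₁)) ∧
        (1:ℝ)/4 ≤ ∫ z in S, w z := by
    have hhalf := gauss_half v hv
    have htail := gauss_tail v hv t₁ ht₁ hσ
    have hIoc := gauss_Ioc v hv t₁ ht₁ hσ hhalf htail
    rcases le_total η x with hηx | hηx
    · refine ⟨Set.Ioc 0 t₁, measurableSet_Ioc, ?_, hIoc⟩
      rintro z ⟨hz1, hz2⟩
      constructor <;> [linarith; linarith]
    · refine ⟨Set.Ioc (-t₁) 0, measurableSet_Ioc, ?_, ?_⟩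
      · rintro z ⟨hz1, hz2⟩
        constructor <;> [linarith; linarith]
      · rw [hw, gauss_Ioc_neg v t₁]
        exact hIoc
  -- chain
  calc c₁ / 4 = c₁ * (1/4) := by ring
  _ ≤ c₁ * ∫ z in S, w z := by
      apply mul_le_mul_of_nonneg_left hS_meas_ge hc₁.le
  _ = ∫ z in S, w z * c₁ := by rw [integral_mul_const]; ring
  _ ≤ ∫ z in S, w z * ρ (x - z) := by
      apply setIntegral_mono_on
        (((integrable_gaussianPDFReal 0 v).integrableOn).mul_const c₁)
        h2.integrableOn hS_meas
      intro z hz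
      exact mul_le_mul_of_nonneg_left (hlow _ (hS_sub z hz)) (hw_nonneg z)
  _ ≤ ∫ z, w z * ρ (x - z) := by
      apply setIntegral_le_integral h2
      filter_upwards with z
      exact mul_nonneg (hw_nonneg z) (hρ_nonneg _)
end

section
/- Let p and q be probability density functions supported on [−1,1] with p(x), q(x) ≥ 1/4 for all x ∈ [−1,1], and suppose that for some ε, ζ > 0 and k ∈ ℕ: |p(x) − q(x)| ≤ ε · 1(|x| ≤ ζ) for all x ∈ [−1,1], and ∫_{−ζ}^{ζ} x^ℓ (p(x) − q(x)) dx = 0 for all ℓ = 0, 1, …, k. Then for every σ ≤ 1/2 and every x ∈ ℝ, |log( (p * φ_{σ²})(x) / (q * φ_{σ²})(x) )| ≤ C ε (ζ/σ)^{k+2}, where C > 0 is an absolute constant. -/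
/-!
Write `φ` for the centred Gaussian density of variance `σ²`, `P = (p * φ)(x)`, `Q = (q * φ)(x)`
and `d = p - q`. Since `p, q ≥ 1/4` on an interval of length `σ/4` inside `[-1, 1]` on which
`φ(x - y) ≥ e^{|x|/σ - 1} φ(x)`, both `P` and `Q` are at least `(σ/16) e^{|x|/σ - 1} φ(x)`.

If `σ ≤ ζ`, then `|d| ≤ 4εp` and `|d| ≤ 4εq` already give `|P - Q| ≤ 4ε min(P, Q)`. If `ζ ≤ σ`,
write `φ(x - y) = φ(x) exp(ay + cy²)` with `a = x/σ²`, `c = -1/(2σ²)` and expand the exponential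
as a double power series in `y`. The vanishing moments kill every monomial of degree at most `k`,
and the monomial of degree `n > k` integrates against `d` to at most
`2ε ζ^{n+1} ≤ 2ε σ^{n+1} (ζ/σ)^{k+2}`.
Summing against the majorant series `exp(|a|σ + |c|σ²) = e^{|x|/σ + 1/2}` gives
`|P - Q| ≤ 2εσ (ζ/σ)^{k+2} e^{|x|/σ + 1/2} φ(x) ≤ 256 ε (ζ/σ)^{k+2} min(P, Q)`.
Finally `|log(P/Q)| ≤ θ` whenever `|P - Q| ≤ θ min(P, Q)`, by `log t ≤ t - 1`.
-/

open MeasureTheory ProbabilityTheory Real Set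
open scoped NNReal Nat

noncomputable def expQuadCoeff (a c : ℝ) (ij : ℕ × ℕ) : ℝ := a ^ ij.1 / ij.1 ! * (c ^ ij.2 / ij.2 !)

theorem abs_expQuadCoeff (a c : ℝ) (ij : ℕ × ℕ) :
    |expQuadCoeff a c ij| = expQuadCoeff |a| |c| ij := by
  simp [expQuadCoeff, abs_mul, abs_div, abs_pow]

theorem hasSum_expQuadCoeff_mul_pow (a c y : ℝ) :
    HasSum (fun ij : ℕ × ℕ => expQuadCoeff a c ij * y ^ (ij.1 + 2 * ij.2))
      (exp (a * y + c * y ^ 2)) := by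
  have hexp (t : ℝ) : HasSum (fun n => t ^ n / n !) (exp t) := by
    rw [exp_eq_exp_ℝ]
    exact NormedSpace.expSeries_div_hasSum_exp t
  have hnorm (t : ℝ) : Summable fun n => ‖t ^ n / (n ! : ℝ)‖ := by
    simpa [norm_div, norm_pow] using summable_pow_div_factorial |t|
  rw [exp_add]
  refine ((hexp _).mul (hexp _)
    (summable_mul_of_summable_norm (hnorm (a * y)) (hnorm (c * y ^ 2)))).congr_fun fun ij => ?_
  simp only [expQuadCoeff]
  ring

section Moments

variable {d : ℝ → ℝ} {ε ζ : ℝ}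

theorem setIntegral_norm_pow_mul_le (hd : ∀ y ∈ Icc (-ζ) ζ, |d y| ≤ ε) (hζ : 0 ≤ ζ) (n : ℕ) :
    ∫ y in Icc (-ζ) ζ, ‖y ^ n * d y‖ ≤ 2 * ε * ζ ^ (n + 1) := by
  calc ∫ y in Icc (-ζ) ζ, ‖y ^ n * d y‖ ≤ ∫ _ in Icc (-ζ) ζ, ζ ^ n * ε := by
        refine integral_mono_of_nonneg (ae_of_all _ fun _ => norm_nonneg _) (integrable_const _)
          (ae_restrict_of_forall_mem measurableSet_Icc fun y hy => ?_)
        beta_reduce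
        rw [norm_mul, norm_pow, norm_eq_abs, norm_eq_abs]
        exact mul_le_mul (pow_le_pow_left₀ (abs_nonneg y) (abs_le.mpr hy) n) (hd y hy)
          (abs_nonneg _) (by positivity)
    _ = 2 * ε * ζ ^ (n + 1) := by
        rw [setIntegral_const, Real.volume_real_Icc_of_le (by linarith), smul_eq_mul]
        ring

variable {k : ℕ} {s : ℝ}

theorem norm_setIntegral_pow_mul_le_of_moments_eq_zero (hd : ∀ y ∈ Icc (-ζ) ζ, |d y| ≤ ε)
    (hmom : ∀ n ≤ k, ∫ y in Icc (-ζ) ζ, y ^ n * d y = 0) (hζ : 0 ≤ ζ) (hs : 0 < s)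
    (hζs : ζ ≤ s) (n : ℕ) :
    ‖∫ y in Icc (-ζ) ζ, y ^ n * d y‖ ≤ 2 * ε * (ζ / s) ^ (k + 2) * s ^ (n + 1) := by
  have hε : 0 ≤ ε := (abs_nonneg _).trans (hd 0 ⟨by linarith, hζ⟩)
  rcases le_or_gt n k with hlow | hhigh
  · rw [hmom n hlow, norm_zero]
    positivity
  calc _ ≤ 2 * ε * ζ ^ (n + 1) :=
        (norm_integral_le_integral_norm _).trans (setIntegral_norm_pow_mul_le hd hζ n)
    _ = 2 * ε * ((ζ / s) ^ (n + 1) * s ^ (n + 1)) := by rw [← mul_pow, div_mul_cancel₀ _ hs.ne']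
    _ ≤ 2 * ε * ((ζ / s) ^ (k + 2) * s ^ (n + 1)) := by
        gcongr _ * (?_ * _)
        exact pow_le_pow_of_le_one (by positivity) ((div_le_one hs).mpr hζs) (by omega)
    _ = _ := by ring

theorem abs_setIntegral_mul_exp_le_of_moments_eq_zero
    (hdi : IntegrableOn d (Icc (-ζ) ζ)) (hd : ∀ y ∈ Icc (-ζ) ζ, |d y| ≤ ε)
    (hmom : ∀ n ≤ k, ∫ y in Icc (-ζ) ζ, y ^ n * d y = 0) (hζ : 0 ≤ ζ) (hs : 0 < s)
    (hζs : ζ ≤ s) (a c : ℝ) :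
    |∫ y in Icc (-ζ) ζ, d y * exp (a * y + c * y ^ 2)| ≤
      2 * ε * s * (ζ / s) ^ (k + 2) * exp (|a| * s + |c| * s ^ 2) := by
  have hε : 0 ≤ ε := (abs_nonneg _).trans (hd 0 ⟨by linarith, hζ⟩)
  set F : ℕ × ℕ → ℝ → ℝ := fun ij y => expQuadCoeff a c ij * (y ^ (ij.1 + 2 * ij.2) * d y)
  have hF_int (ij : ℕ × ℕ) : Integrable (F ij) (volume.restrict (Icc (-ζ) ζ)) :=
    ((hdi.continuousOn_mul (continuous_pow _).continuousOn isCompact_Icc)).const_mul _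
  have hcoef (ij : ℕ × ℕ) : ‖expQuadCoeff a c ij‖ = expQuadCoeff |a| |c| ij := by
    rw [norm_eq_abs, abs_expQuadCoeff]
  have hcoef0 (ij : ℕ × ℕ) : 0 ≤ expQuadCoeff |a| |c| ij := by
    simp only [expQuadCoeff]; positivity
  have hF_norm (ij : ℕ × ℕ) : ∫ y in Icc (-ζ) ζ, ‖F ij y‖ ≤
      2 * ε * s * (expQuadCoeff |a| |c| ij * s ^ (ij.1 + 2 * ij.2)) := by
    simp only [F, norm_mul (expQuadCoeff a c ij), hcoef, integral_const_mul]
    calc _ ≤ expQuadCoeff |a| |c| ij * (2 * ε * ζ ^ (ij.1 + 2 * ij.2 + 1)) := by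
          gcongr; exacts [hcoef0 ij, setIntegral_norm_pow_mul_le hd hζ _]
      _ ≤ expQuadCoeff |a| |c| ij * (2 * ε * s ^ (ij.1 + 2 * ij.2 + 1)) := by
          gcongr; exact hcoef0 ij
      _ = _ := by ring
  have hsum := hasSum_integral_of_summable_integral_norm hF_int
    (.of_nonneg_of_le (fun _ => integral_nonneg fun _ => norm_nonneg _) hF_norm
      ((hasSum_expQuadCoeff_mul_pow |a| |c| s).summable.mul_left _))
  have hF_tsum : ∫ y in Icc (-ζ) ζ, ∑' ij, F ij y
      = ∫ y in Icc (-ζ) ζ, d y * exp (a * y + c * y ^ 2) := by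
    congr 1 with y
    simp only [F, ← mul_assoc]
    rw [mul_comm (d y)]
    exact ((hasSum_expQuadCoeff_mul_pow a c y).mul_right (d y)).tsum_eq
  rw [← hF_tsum, ← hsum.tsum_eq, ← norm_eq_abs]
  refine tsum_of_norm_bounded ((hasSum_expQuadCoeff_mul_pow |a| |c| s).mul_left
    (2 * ε * s * (ζ / s) ^ (k + 2))) fun ij => ?_
  simp only [F, integral_const_mul, norm_mul, hcoef]
  calc _ ≤ expQuadCoeff |a| |c| ij * (2 * ε * (ζ / s) ^ (k + 2) * s ^ (ij.1 + 2 * ij.2 + 1)) :=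
        mul_le_mul_of_nonneg_left
          (norm_setIntegral_pow_mul_le_of_moments_eq_zero hd hmom hζ hs hζs _) (hcoef0 ij)
    _ = _ := by ring

end Moments

theorem gaussianPDFReal_sub_eq_mul_exp (μ : ℝ) (v : ℝ≥0) (x y : ℝ) :
    gaussianPDFReal μ v (x - y) =
      gaussianPDFReal μ v x * exp ((x - μ) / v * y + -(2 * (v : ℝ))⁻¹ * y ^ 2) := by
  simp only [gaussianPDFReal, mul_assoc, ← exp_add]
  congr 2
  rcases eq_or_ne (v : ℝ) 0 with hv | hv
  · simp [hv]
  · field_simp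
    ring

theorem gaussianPDFReal_le (μ : ℝ) (v : ℝ≥0) (x : ℝ) :
    gaussianPDFReal μ v x ≤ (√(2 * π * v))⁻¹ := by
  rw [gaussianPDFReal]
  refine mul_le_of_le_one_right (by positivity) (exp_le_one_iff.mpr ?_)
  exact div_nonpos_of_nonpos_of_nonneg (by nlinarith [sq_nonneg (x - μ)]) (by positivity)

theorem MeasureTheory.Integrable.mul_gaussianPDFReal_sub {f : ℝ → ℝ} (hf : Integrable f)
    (μ : ℝ) (v : ℝ≥0) (x : ℝ) : Integrable (fun y => f y * gaussianPDFReal μ v (x - y)) :=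
  hf.mul_bdd
    ((measurable_gaussianPDFReal μ v).comp (measurable_const.sub measurable_id)).aestronglyMeasurable
    (ae_of_all _ fun y => by
      rw [norm_of_nonneg (gaussianPDFReal_nonneg _ _ _)]; exact gaussianPDFReal_le μ v _)

theorem sq_sub_le_of_mem_Icc {σ x y : ℝ} (hσ2 : σ ≤ 1 / 2)
    (hy : y ∈ Icc (max (-1) (min x (1 - σ / 4))) (max (-1) (min x (1 - σ / 4)) + σ / 4)) :
    (x - y) ^ 2 ≤ (|x| - σ) ^ 2 + σ ^ 2 := by
  obtain ⟨hy1, hy2⟩ := hy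
  rcases le_total x (-1) with hx | hx
  · rw [min_eq_left (by linarith), max_eq_left hx] at hy1 hy2
    rw [abs_of_nonpos (by linarith)]
    nlinarith
  rcases le_total x (1 - σ / 4) with hx' | hx'
  · rw [min_eq_left hx', max_eq_right hx] at hy1 hy2
    nlinarith [sq_nonneg (|x| - σ)]
  · rw [min_eq_right hx', max_eq_right (by linarith)] at hy1 hy2
    rw [abs_of_nonneg (by linarith)]
    nlinarith

theorem exp_mul_gaussianPDFReal_le_of_sq_sub_le {σ x y : ℝ} (hσ : σ ≠ 0)
    (h : (x - y) ^ 2 ≤ (|x| - σ) ^ 2 + σ ^ 2) :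
    exp (|x| / σ - 1) * gaussianPDFReal 0 (σ ^ 2).toNNReal x ≤
      gaussianPDFReal 0 (σ ^ 2).toNNReal (x - y) := by
  rw [gaussianPDFReal_sub_eq_mul_exp, Real.coe_toNNReal _ (sq_nonneg σ), sub_zero, mul_comm]
  refine mul_le_mul_of_nonneg_left (exp_le_exp.mpr ?_) (gaussianPDFReal_nonneg _ _ _)
  have : x / σ ^ 2 * y + -(2 * σ ^ 2)⁻¹ * y ^ 2 - (|x| / σ - 1) =
      ((|x| - σ) ^ 2 + σ ^ 2 - (x - y) ^ 2) / (2 * σ ^ 2) := by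
    field_simp
    linear_combination -sq_abs x
  nlinarith [div_nonneg (sub_nonneg.mpr h) (by positivity : (0 : ℝ) ≤ 2 * σ ^ 2)]

theorem mul_exp_le_integral_mul_gaussianPDFReal_sub {f : ℝ → ℝ} {m σ : ℝ} (hf : Integrable f)
    (hf0 : ∀ y, 0 ≤ f y) (hfm : ∀ y ∈ Icc (-1 : ℝ) 1, m ≤ f y) (hσ : 0 < σ) (hσ2 : σ ≤ 1 / 2)
    (x : ℝ) :
    m * (σ / 4) * (exp (|x| / σ - 1) * gaussianPDFReal 0 (σ ^ 2).toNNReal x) ≤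
      ∫ y, f y * gaussianPDFReal 0 (σ ^ 2).toNNReal (x - y) := by
  set y₀ := max (-1) (min x (1 - σ / 4))
  set c := exp (|x| / σ - 1) * gaussianPDFReal 0 (σ ^ 2).toNNReal x
  have hJ : Icc y₀ (y₀ + σ / 4) ⊆ Icc (-1) 1 := by
    have : y₀ ≤ 1 - σ / 4 := max_le (by linarith) (min_le_right _ _)
    exact Icc_subset_Icc (le_max_left _ _) (by linarith)
  have hint := hf.mul_gaussianPDFReal_sub 0 (σ ^ 2).toNNReal x
  have hpt (y : ℝ) (hy : y ∈ Icc y₀ (y₀ + σ / 4)) :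
      m * c ≤ f y * gaussianPDFReal 0 (σ ^ 2).toNNReal (x - y) :=
    mul_le_mul (hfm y (hJ hy))
      (exp_mul_gaussianPDFReal_le_of_sq_sub_le hσ.ne' (sq_sub_le_of_mem_Icc hσ2 hy))
      (mul_nonneg (exp_pos _).le (gaussianPDFReal_nonneg _ _ _)) (hf0 y)
  calc m * (σ / 4) * c = m * c * volume.real (Icc y₀ (y₀ + σ / 4)) := by
        rw [volume_real_Icc_of_le (by linarith)]; ring
    _ ≤ ∫ y in Icc y₀ (y₀ + σ / 4), f y * gaussianPDFReal 0 (σ ^ 2).toNNReal (x - y) :=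
        setIntegral_ge_of_const_le_real measurableSet_Icc measure_Icc_lt_top.ne hpt
          hint.integrableOn
    _ ≤ _ := setIntegral_le_integral hint
        (ae_of_all _ fun y => mul_nonneg (hf0 y) (gaussianPDFReal_nonneg _ _ _))

theorem integral_mul_gaussianPDFReal_sub_pos {f : ℝ → ℝ} {m σ : ℝ} (hf : Integrable f)
    (hf0 : ∀ y, 0 ≤ f y) (hfm : ∀ y ∈ Icc (-1 : ℝ) 1, m ≤ f y) (hm : 0 < m) (hσ : 0 < σ)
    (hσ2 : σ ≤ 1 / 2) (x : ℝ) :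
    0 < ∫ y, f y * gaussianPDFReal 0 (σ ^ 2).toNNReal (x - y) := by
  refine lt_of_lt_of_le ?_ (mul_exp_le_integral_mul_gaussianPDFReal_sub hf hf0 hfm hσ hσ2 x)
  have := gaussianPDFReal_pos 0 (σ ^ 2).toNNReal x (by simp [hσ.ne'])
  positivity

theorem abs_integral_mul_gaussianPDFReal_sub_le_of_moments_eq_zero {d : ℝ → ℝ} {ε ζ σ : ℝ}
    {k : ℕ} (hdi : Integrable d) (hdζ : ∀ y ∉ Icc (-ζ) ζ, d y = 0)
    (hd : ∀ y ∈ Icc (-ζ) ζ, |d y| ≤ ε) (hmom : ∀ n ≤ k, ∫ y in Icc (-ζ) ζ, y ^ n * d y = 0)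
    (hζ : 0 ≤ ζ) (hσ : 0 < σ) (hζσ : ζ ≤ σ) (x : ℝ) :
    |∫ y, d y * gaussianPDFReal 0 (σ ^ 2).toNNReal (x - y)| ≤
      2 * ε * σ * (ζ / σ) ^ (k + 2) * exp (|x| / σ + 1 / 2) *
        gaussianPDFReal 0 (σ ^ 2).toNNReal x := by
  rw [← setIntegral_eq_integral_of_forall_compl_eq_zero fun y hy => by rw [hdζ y hy, zero_mul]]
  simp_rw [gaussianPDFReal_sub_eq_mul_exp, Real.coe_toNNReal _ (sq_nonneg σ), sub_zero,
    mul_left_comm (d _), integral_const_mul, abs_mul, abs_of_nonneg (gaussianPDFReal_nonneg _ _ _)]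
  have hexp : |x / σ ^ 2| * σ + |-(2 * σ ^ 2)⁻¹| * σ ^ 2 = |x| / σ + 1 / 2 := by
    rw [abs_div, abs_neg, abs_inv, abs_of_pos (by positivity : 0 < σ ^ 2),
      abs_of_pos (by positivity : 0 < 2 * σ ^ 2)]
    field_simp
  have := abs_setIntegral_mul_exp_le_of_moments_eq_zero hdi.integrableOn hd hmom hζ hσ hζσ
    (x / σ ^ 2) (-(2 * σ ^ 2)⁻¹)
  rw [hexp] at this
  calc _ ≤ gaussianPDFReal 0 (σ ^ 2).toNNReal x *
        (2 * ε * σ * (ζ / σ) ^ (k + 2) * exp (|x| / σ + 1 / 2)) :=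
        mul_le_mul_of_nonneg_left this (gaussianPDFReal_nonneg _ _ _)
    _ = _ := by ring

theorem abs_log_div_le_of_abs_sub_le {P Q θ : ℝ} (hP : 0 < P) (hQ : 0 < Q)
    (hθP : |P - Q| ≤ θ * P) (hθQ : |P - Q| ≤ θ * Q) : |log (P / Q)| ≤ θ := by
  have hup : log (P / Q) ≤ θ := by
    refine (log_le_sub_one_of_pos (div_pos hP hQ)).trans ?_
    rw [div_sub_one hQ.ne', div_le_iff₀ hQ]
    exact (le_abs_self _).trans hθQ
  have hlow : log (Q / P) ≤ θ := by
    refine (log_le_sub_one_of_pos (div_pos hQ hP)).trans ?_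
    rw [div_sub_one hP.ne', div_le_iff₀ hP]
    rw [abs_sub_comm] at hθP
    exact (le_abs_self _).trans hθP
  rw [← inv_div, log_inv] at hlow
  exact abs_le.mpr ⟨by linarith, hup⟩

section Comparison

variable {d f : ℝ → ℝ} {ε ζ σ : ℝ} {k : ℕ}

theorem exp_three_halves_le_eight : exp (3 / 2) ≤ 8 := by
  have := exp_one_lt_d9
  calc exp (3 / 2) ≤ exp (1 + 1) := exp_le_exp.mpr (by norm_num)
    _ = exp 1 * exp 1 := exp_add 1 1
    _ ≤ 8 := by nlinarith [exp_pos 1]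

theorem abs_integral_mul_gaussianPDFReal_sub_le_of_moments_of_le (hdi : Integrable d)
    (hdζ : ∀ y ∉ Icc (-ζ) ζ, d y = 0) (hd : ∀ y ∈ Icc (-ζ) ζ, |d y| ≤ ε)
    (hmom : ∀ n ≤ k, ∫ y in Icc (-ζ) ζ, y ^ n * d y = 0) (hf : Integrable f)
    (hf0 : ∀ y, 0 ≤ f y) (hf14 : ∀ y ∈ Icc (-1 : ℝ) 1, 1 / 4 ≤ f y) (hζ : 0 ≤ ζ) (hσ : 0 < σ)
    (hσ2 : σ ≤ 1 / 2) (hζσ : ζ ≤ σ) (x : ℝ) :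
    |∫ y, d y * gaussianPDFReal 0 (σ ^ 2).toNNReal (x - y)| ≤
      256 * ε * (ζ / σ) ^ (k + 2) * ∫ y, f y * gaussianPDFReal 0 (σ ^ 2).toNNReal (x - y) := by
  have hε : 0 ≤ ε := (abs_nonneg _).trans (hd 0 ⟨by linarith, hζ⟩)
  set L := 1 / 4 * (σ / 4) * (exp (|x| / σ - 1) * gaussianPDFReal 0 (σ ^ 2).toNNReal x)
  have hL : 0 ≤ L := by have := gaussianPDFReal_nonneg 0 (σ ^ 2).toNNReal x; positivity
  calc _ ≤ 2 * ε * σ * (ζ / σ) ^ (k + 2) * exp (|x| / σ + 1 / 2) *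
        gaussianPDFReal 0 (σ ^ 2).toNNReal x :=
        abs_integral_mul_gaussianPDFReal_sub_le_of_moments_eq_zero hdi hdζ hd hmom hζ hσ hζσ x
    _ = 32 * exp (3 / 2) * ε * (ζ / σ) ^ (k + 2) * L := by
        rw [show |x| / σ + 1 / 2 = 3 / 2 + (|x| / σ - 1) by ring, exp_add]
        ring
    _ ≤ 256 * ε * (ζ / σ) ^ (k + 2) * L := by
        gcongr
        linarith [exp_three_halves_le_eight]
    _ ≤ _ := by
        gcongr
        exact mul_exp_le_integral_mul_gaussianPDFReal_sub hf hf0 hf14 hσ hσ2 x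

theorem abs_integral_mul_gaussianPDFReal_sub_le_of_abs_le {C : ℝ} (hf : Integrable f)
    (hdf : ∀ y, |d y| ≤ C * f y) (v : ℝ≥0) (x : ℝ) :
    |∫ y, d y * gaussianPDFReal 0 v (x - y)| ≤ C * ∫ y, f y * gaussianPDFReal 0 v (x - y) := by
  rw [← integral_const_mul, ← norm_eq_abs]
  refine norm_integral_le_of_norm_le ((hf.mul_gaussianPDFReal_sub 0 v x).const_mul C)
    (ae_of_all _ fun y => ?_)
  rw [norm_mul, norm_of_nonneg (gaussianPDFReal_nonneg _ _ _), norm_eq_abs, ← mul_assoc]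
  exact mul_le_mul_of_nonneg_right (hdf y) (gaussianPDFReal_nonneg _ _ _)

theorem abs_integral_mul_gaussianPDFReal_sub_le (hdi : Integrable d)
    (hd : ∀ y ∈ Icc (-1 : ℝ) 1, |d y| ≤ ε * indicator {y : ℝ | |y| ≤ ζ} (fun _ => (1 : ℝ)) y)
    (hd1 : ∀ y ∉ Icc (-1 : ℝ) 1, d y = 0) (hmom : ∀ n ≤ k, ∫ y in Icc (-ζ) ζ, y ^ n * d y = 0)
    (hf : Integrable f) (hf0 : ∀ y, 0 ≤ f y) (hf14 : ∀ y ∈ Icc (-1 : ℝ) 1, 1 / 4 ≤ f y)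
    (hε : 0 ≤ ε) (hζ : 0 ≤ ζ) (hσ : 0 < σ) (hσ2 : σ ≤ 1 / 2) (x : ℝ) :
    |∫ y, d y * gaussianPDFReal 0 (σ ^ 2).toNNReal (x - y)| ≤
      256 * ε * (ζ / σ) ^ (k + 2) * ∫ y, f y * gaussianPDFReal 0 (σ ^ 2).toNNReal (x - y) := by
  have hdε (y : ℝ) : |d y| ≤ ε := by
    by_cases hy : y ∈ Icc (-1 : ℝ) 1
    · exact (hd y hy).trans
        (mul_le_of_le_one_right hε (indicator_apply_le' (fun _ => le_rfl) fun _ => zero_le_one))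
    · simp [hd1 y hy, hε]
  rcases le_total ζ σ with hζσ | hσζ
  · have hdζ (y : ℝ) (hy : y ∉ Icc (-ζ) ζ) : d y = 0 := by
      by_cases hy1 : y ∈ Icc (-1 : ℝ) 1
      · have := hd y hy1
        rwa [indicator_of_notMem (by simpa [abs_le] using hy), mul_zero, abs_nonpos_iff] at this
      · exact hd1 y hy1
    exact abs_integral_mul_gaussianPDFReal_sub_le_of_moments_of_le hdi hdζ (fun y _ => hdε y)
      hmom hf hf0 hf14 hζ hσ hσ2 hζσ x
  · have hdf (y : ℝ) : |d y| ≤ 4 * ε * f y := by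
      by_cases hy : y ∈ Icc (-1 : ℝ) 1
      · nlinarith [hdε y, hf14 y hy]
      · simp only [hd1 y hy, abs_zero]; have := hf0 y; positivity
    have hr : 1 ≤ (ζ / σ) ^ (k + 2) := one_le_pow₀ ((one_le_div hσ).mpr hσζ)
    calc _ ≤ 4 * ε * ∫ y, f y * gaussianPDFReal 0 (σ ^ 2).toNNReal (x - y) :=
          abs_integral_mul_gaussianPDFReal_sub_le_of_abs_le hf hdf _ x
      _ ≤ _ := mul_le_mul_of_nonneg_right (by nlinarith)
          (integral_nonneg fun y => mul_nonneg (hf0 y) (gaussianPDFReal_nonneg _ _ _))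

end Comparison

/-- There is an absolute constant `C > 0` such that: for all probability
densities `p, q` supported on `[−1,1]` with `p, q ≥ 1/4` on `[−1,1]`, if
`|p − q| ≤ ε·1(|x| ≤ ζ)` on `[−1,1]` and `∫_{−ζ}^{ζ} x^ℓ (p(x) − q(x)) dx = 0` for
`ℓ = 0,…,k`, then for every `0 < σ ≤ 1/2` and every `x ∈ ℝ`,
`|log((p*φ_{σ²})(x) / (q*φ_{σ²})(x))| ≤ C ε (ζ/σ)^{k+2}`. -/
theorem stmt18 :
    ∃ C : ℝ, 0 < C ∧
      ∀ (p q : ℝ → ℝ), Measurable p → Measurable q →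
      (∀ x, 0 ≤ p x) → (∀ x, 0 ≤ q x) →
      (∀ x, x ∉ Set.Icc (-1 : ℝ) 1 → p x = 0) →
      (∀ x, x ∉ Set.Icc (-1 : ℝ) 1 → q x = 0) →
      (∫ x, p x = 1) → (∫ x, q x = 1) →
      (∀ x ∈ Set.Icc (-1 : ℝ) 1, 1 / 4 ≤ p x) →
      (∀ x ∈ Set.Icc (-1 : ℝ) 1, 1 / 4 ≤ q x) →
      ∀ (ε ζ : ℝ) (k : ℕ), 0 < ε → 0 < ζ →
      (∀ x ∈ Set.Icc (-1 : ℝ) 1,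
        |p x - q x| ≤ ε * Set.indicator {y : ℝ | |y| ≤ ζ} (fun _ => (1 : ℝ)) x) →
      (∀ ℓ : ℕ, ℓ ≤ k → ∫ x in Set.Icc (-ζ) ζ, x ^ ℓ * (p x - q x) = 0) →
      ∀ σ : ℝ, 0 < σ → σ ≤ 1 / 2 →
      ∀ x : ℝ,
        |Real.log ((∫ y, p y * gaussianPDFReal 0 (Real.toNNReal (σ ^ 2)) (x - y)) /
            (∫ y, q y * gaussianPDFReal 0 (Real.toNNReal (σ ^ 2)) (x - y)))|
          ≤ C * ε * (ζ / σ) ^ (k + 2) := by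
  refine ⟨256, by norm_num, ?_⟩
  intro p q _ _ hp0 hq0 hp1 hq1 hpint hqint hp14 hq14 ε ζ k hε hζ hpq hmom σ hσ hσ2 x
  have hpi : Integrable p := .of_integral_ne_zero (by simp [hpint])
  have hqi : Integrable q := .of_integral_ne_zero (by simp [hqint])
  have hdiff : ∫ y, (p y - q y) * gaussianPDFReal 0 (σ ^ 2).toNNReal (x - y) =
      (∫ y, p y * gaussianPDFReal 0 (σ ^ 2).toNNReal (x - y)) -
        ∫ y, q y * gaussianPDFReal 0 (σ ^ 2).toNNReal (x - y) := by
    simp_rw [sub_mul]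
    exact integral_sub (hpi.mul_gaussianPDFReal_sub _ _ x) (hqi.mul_gaussianPDFReal_sub _ _ x)
  have key {f : ℝ → ℝ} (hf : Integrable f) (hf0 : ∀ y, 0 ≤ f y)
      (hf14 : ∀ y ∈ Icc (-1 : ℝ) 1, 1 / 4 ≤ f y) := hdiff ▸
    abs_integral_mul_gaussianPDFReal_sub_le (hpi.sub hqi) hpq
      (fun y hy => by simp [hp1 y hy, hq1 y hy]) hmom hf hf0 hf14 hε.le hζ.le hσ hσ2 x
  exact abs_log_div_le_of_abs_sub_le
    (integral_mul_gaussianPDFReal_sub_pos hpi hp0 hp14 (by norm_num) hσ hσ2 x)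
    (integral_mul_gaussianPDFReal_sub_pos hqi hq0 hq14 (by norm_num) hσ hσ2 x)
    (key hpi hp0 hp14) (key hqi hq0 hq14)
end
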